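/- arXiv:2207.02511 — 8 statements merged into one kernel-verified Lean document; each statement's English description precedes it below -/
import Mathlib

section
/- Let E > 0 and ν ∈ (−1, 1/2). For every smooth compactly supported function φ : ℝ² → ℝ one has ((1−ν²)/E) · ∫_{ℝ²} v̄(x) · Δ(Δφ)(x) dx = φ(0); that is, v̄ is a fundamental solution at the origin of the bilaplacian equation ((1−ν²)/E)·Δ²v = δ₀ in the sense of distributions. -/
open Real MeasureTheory Filter

noncomputable section

/-- First partial derivative `∂_{x₁}`. -/
def pd1 (f : ℝ × ℝ → ℝ) (x : ℝ × ℝ) : ℝ := fderiv ℝ f x (1, 0)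

/-- Second partial derivative `∂_{x₂}`. -/
def pd2 (f : ℝ × ℝ → ℝ) (x : ℝ × ℝ) : ℝ := fderiv ℝ f x (0, 1)

/-- Laplacian of a function on `ℝ²`. -/
def lap (f : ℝ × ℝ → ℝ) : ℝ × ℝ → ℝ := fun x => pd1 (pd1 f) x + pd2 (pd2 f) x

/-- Squared Frobenius norm `|∇²f|²` of the Hessian (sum of squares of the four entries). -/
def hessSq (f : ℝ × ℝ → ℝ) (x : ℝ × ℝ) : ℝ :=
  (pd1 (pd1 f) x)^2 + (pd1 (pd2 f) x)^2 + (pd2 (pd1 f) x)^2 + (pd2 (pd2 f) x)^2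

/-- Squared norm `|∇f|²` of the gradient. -/
def gradSq (f : ℝ × ℝ → ℝ) (x : ℝ × ℝ) : ℝ := (pd1 f x)^2 + (pd2 f x)^2

/-- Open Euclidean disc `B_r(ξ)`. -/
def ball2 (ξ : ℝ × ℝ) (r : ℝ) : Set (ℝ × ℝ) := {x | (x.1-ξ.1)^2 + (x.2-ξ.2)^2 < r^2}

/-- Open annulus `A_{r,R}(0)` centered at the origin. -/
def annulus (r R : ℝ) : Set (ℝ × ℝ) := {x | r^2 < x.1^2 + x.2^2 ∧ x.1^2 + x.2^2 < R^2}

/-- The elastic (Airy) energy `𝒢(f; A) = (1/2)((1+ν)/E) ∫_A (|∇²f|² − ν (Δf)²) dx`. -/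
def energy (E ν : ℝ) (f : ℝ × ℝ → ℝ) (A : Set (ℝ × ℝ)) : ℝ :=
  (1/2) * ((1+ν)/E) * ∫ x in A, (hessSq f x - ν * (lap f x)^2)

/-- The function `v̄(x) = (E/(1−ν²))·(|x|²/(16π))·log |x|²` (with `v̄(0)=0`). -/
def vbar (E ν : ℝ) (x : ℝ × ℝ) : ℝ :=
  if x = 0 then 0
  else (E / (1 - ν^2)) * ((x.1^2 + x.2^2) / (16 * π)) * Real.log (x.1^2 + x.2^2)

/-- The disclination-dipole Airy function `v̄_h(x) = −s(v̄(x−(h/2,0)) − v̄(x+(h/2,0)))`. -/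
def vbarh (E ν s h : ℝ) (x : ℝ × ℝ) : ℝ :=
  -s * (vbar E ν (x - (h/2, 0)) - vbar E ν (x + (h/2, 0)))

/-!
`v̄` is `E / ((1 - ν²) 16π)` times `w₀(x) = |x|² log |x|²`, the limit as `ε → 0` of the smooth
radial functions `w_ε(x) = (|x|² + ε²) log(|x|² + ε²)` (`regSqLog ε`). The radial Laplacian
`Δ(g(|x|²)) = 4g' + 4|x|²g''` gives `Δ²w_ε = 32ε⁴/(|x|² + ε²)³ = 16π ε⁻² K(x/ε)` for a kernel
`K` (`bilapKernel`) of unit mass. Integrating by parts four times,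
`∫ w_ε Δ²φ = ∫ Δ²w_ε φ → 16π φ(0)`, while the left side tends to `∫ w₀ Δ²φ`.
-/

open Set Topology

theorem integrable_mul_of_hasCompactSupport {X : Type*} [TopologicalSpace X]
    [MeasurableSpace X] [OpensMeasurableSpace X] {μ : Measure X} [IsFiniteMeasureOnCompacts μ]
    {f g : X → ℝ} (hf : Continuous f) (hg : Continuous g) (hgs : HasCompactSupport g) :
    Integrable (fun x => f x * g x) μ :=
  (hf.mul hg).integrable_of_hasCompactSupport hgs.mul_left

theorem continuous_integral_mul_of_hasCompactSupport {X Y : Type*} [TopologicalSpace X]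
    [FirstCountableTopology X] [LocallyCompactSpace X] [TopologicalSpace Y] [MeasurableSpace Y]
    [OpensMeasurableSpace Y] {μ : Measure Y} [IsLocallyFiniteMeasure μ] {F : X → Y → ℝ}
    (hF : Continuous F.uncurry) {L : Y → ℝ} (hL : Continuous L) (hLs : HasCompactSupport L) :
    Continuous fun p => ∫ y, F p y * L y ∂μ := by
  have hcont := continuous_parametric_integral_of_continuous (μ := μ)
    (f := fun p y => F p y * L y) (hF.mul (hL.comp continuous_snd)) hLs
  refine hcont.congr fun p => setIntegral_eq_integral_of_forall_compl_eq_zero fun y hy => ?_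
  rw [image_eq_zero_of_notMem_tsupport hy, mul_zero]

section DirectionalDerivative

variable {E : Type*} [NormedAddCommGroup E] [NormedSpace ℝ E]

theorem ContDiff.fderiv_apply_const {f : E → ℝ} {m n : WithTop ℕ∞} (hf : ContDiff ℝ n f)
    (hmn : m + 1 ≤ n) (v : E) : ContDiff ℝ m (fderiv ℝ f · v) :=
  (hf.fderiv_right hmn).clm_apply contDiff_const

theorem ContDiff.continuous_fderiv_fderiv_apply {f : E → ℝ} (hf : ContDiff ℝ 2 f) (v : E) :
    Continuous (fderiv ℝ (fderiv ℝ f · v) · v) :=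
  ((hf.fderiv_apply_const (m := 1) (by norm_num) v).fderiv_apply_const (m := 0) (by norm_num)
    v).continuous

variable [FiniteDimensional ℝ E] [MeasurableSpace E] [BorelSpace E]
  {μ : Measure E} [μ.IsAddHaarMeasure]

theorem integral_mul_fderiv_fderiv_eq {a b : E → ℝ} (ha : ContDiff ℝ 2 a) (hb : ContDiff ℝ 2 b)
    (hbs : HasCompactSupport b) (v : E) :
    ∫ x, a x * fderiv ℝ (fderiv ℝ b · v) x v ∂μ =
      ∫ x, fderiv ℝ (fderiv ℝ a · v) x v * b x ∂μ := by
  have ha' : ContDiff ℝ 1 (fderiv ℝ a · v) := ha.fderiv_apply_const le_rfl v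
  have hb' : ContDiff ℝ 1 (fderiv ℝ b · v) := hb.fderiv_apply_const le_rfl v
  have hb's : HasCompactSupport (fderiv ℝ b · v) := hbs.fderiv_apply ℝ v
  rw [integral_mul_fderiv_eq_neg_fderiv_mul_of_integrable
      (integrable_mul_of_hasCompactSupport ha'.continuous hb'.continuous hb's)
      (integrable_mul_of_hasCompactSupport ha.continuous (hb.continuous_fderiv_fderiv_apply v)
        (hb's.fderiv_apply ℝ v))
      (integrable_mul_of_hasCompactSupport ha.continuous hb'.continuous hb's)
      (fun x _ => (ha.differentiable two_ne_zero).differentiableAt)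
      (fun x _ => (hb'.differentiable one_ne_zero).differentiableAt),
    integral_mul_fderiv_eq_neg_fderiv_mul_of_integrable
      (integrable_mul_of_hasCompactSupport (ha.continuous_fderiv_fderiv_apply v) hb.continuous hbs)
      (integrable_mul_of_hasCompactSupport ha'.continuous hb'.continuous hb's)
      (integrable_mul_of_hasCompactSupport ha'.continuous hb.continuous hbs)
      (fun x _ => (ha'.differentiable one_ne_zero).differentiableAt)
      (fun x _ => (hb.differentiable two_ne_zero).differentiableAt), neg_neg]

end DirectionalDerivative

section Laplacian

theorem lap_apply (f : ℝ × ℝ → ℝ) (x : ℝ × ℝ) :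
    lap f x = fderiv ℝ (fderiv ℝ f · (1, 0)) x (1, 0) + fderiv ℝ (fderiv ℝ f · (0, 1)) x (0, 1) :=
  rfl

theorem ContDiff.lap {f : ℝ × ℝ → ℝ} {m n : WithTop ℕ∞} (hf : ContDiff ℝ n f)
    (hmn : m + 2 ≤ n) : ContDiff ℝ m (lap f) := by
  have hmn' : m + 1 + 1 ≤ n := by rwa [add_assoc, one_add_one_eq_two]
  exact ((hf.fderiv_apply_const hmn' _).fderiv_apply_const le_rfl _).add
    ((hf.fderiv_apply_const hmn' _).fderiv_apply_const le_rfl _)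

theorem HasCompactSupport.lap {f : ℝ × ℝ → ℝ} (hf : HasCompactSupport f) :
    HasCompactSupport (lap f) :=
  ((hf.fderiv_apply ℝ _).fderiv_apply ℝ _).add ((hf.fderiv_apply ℝ _).fderiv_apply ℝ _)

theorem integral_mul_lap_eq {a b : ℝ × ℝ → ℝ} (ha : ContDiff ℝ 2 a) (hb : ContDiff ℝ 2 b)
    (hbs : HasCompactSupport b) : ∫ x, a x * lap b x = ∫ x, lap a x * b x := by
  have hb₁ := (hbs.fderiv_apply ℝ (1, 0)).fderiv_apply ℝ (1, 0)
  have hb₂ := (hbs.fderiv_apply ℝ (0, 1)).fderiv_apply ℝ (0, 1)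
  simp only [lap_apply, mul_add, add_mul]
  rw [integral_add (integrable_mul_of_hasCompactSupport ha.continuous
        (hb.continuous_fderiv_fderiv_apply _) hb₁)
      (integrable_mul_of_hasCompactSupport ha.continuous (hb.continuous_fderiv_fderiv_apply _) hb₂),
    integral_add (integrable_mul_of_hasCompactSupport (ha.continuous_fderiv_fderiv_apply _)
        hb.continuous hbs)
      (integrable_mul_of_hasCompactSupport (ha.continuous_fderiv_fderiv_apply _) hb.continuous hbs),
    integral_mul_fderiv_fderiv_eq ha hb hbs, integral_mul_fderiv_fderiv_eq ha hb hbs]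

theorem integral_mul_lap_lap_eq {a b : ℝ × ℝ → ℝ} (ha : ContDiff ℝ 4 a) (hb : ContDiff ℝ 4 b)
    (hbs : HasCompactSupport b) : ∫ x, a x * lap (lap b) x = ∫ x, lap (lap a) x * b x := by
  rw [integral_mul_lap_eq (ha.of_le (by norm_num)) (hb.lap le_rfl) hbs.lap,
    integral_mul_lap_eq (ha.lap le_rfl) (hb.of_le (by norm_num)) hbs]

theorem hasFDerivAt_fst_sq_add_snd_sq (x : ℝ × ℝ) :
    HasFDerivAt (fun y : ℝ × ℝ => y.1 ^ 2 + y.2 ^ 2)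
      ((2 * x.1) • ContinuousLinearMap.fst ℝ ℝ ℝ + (2 * x.2) • ContinuousLinearMap.snd ℝ ℝ ℝ) x :=
  (((hasFDerivAt_fst (p := x)).pow 2).add ((hasFDerivAt_snd (p := x)).pow 2)).congr_fderiv
    (by ext <;> simp)

variable {g g' g'' : ℝ → ℝ}

theorem fderiv_comp_fst_sq_add_snd_sq_apply (hg : ∀ s ≥ 0, HasDerivAt g (g' s) s)
    (x v : ℝ × ℝ) :
    fderiv ℝ (fun y : ℝ × ℝ => g (y.1 ^ 2 + y.2 ^ 2)) x v =
      2 * g' (x.1 ^ 2 + x.2 ^ 2) * (x.1 * v.1 + x.2 * v.2) := by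
  have h : HasFDerivAt (fun y : ℝ × ℝ => g (y.1 ^ 2 + y.2 ^ 2)) _ x :=
    (hg _ (by positivity)).comp_hasFDerivAt x (hasFDerivAt_fst_sq_add_snd_sq x)
  rw [h.fderiv]
  simp only [smul_add, add_apply, smul_apply,
    ContinuousLinearMap.coe_fst', ContinuousLinearMap.coe_snd', smul_eq_mul]
  ring

theorem fderiv_fderiv_comp_fst_sq_add_snd_sq_apply (hg : ∀ s ≥ 0, HasDerivAt g (g' s) s)
    (hg' : ∀ s ≥ 0, HasDerivAt g' (g'' s) s) (x v : ℝ × ℝ) :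
    fderiv ℝ (fderiv ℝ (fun y : ℝ × ℝ => g (y.1 ^ 2 + y.2 ^ 2)) · v) x v =
      2 * g' (x.1 ^ 2 + x.2 ^ 2) * (v.1 ^ 2 + v.2 ^ 2) +
        4 * g'' (x.1 ^ 2 + x.2 ^ 2) * (x.1 * v.1 + x.2 * v.2) ^ 2 := by
  simp_rw [fderiv_comp_fst_sq_add_snd_sq_apply hg]
  have h : HasFDerivAt
      (fun y : ℝ × ℝ => 2 * g' (y.1 ^ 2 + y.2 ^ 2) * (y.1 * v.1 + y.2 * v.2)) _ x :=
    (((hg' _ (by positivity)).comp_hasFDerivAt x (hasFDerivAt_fst_sq_add_snd_sq x)).const_mul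
      2).mul ((hasFDerivAt_fst.mul_const v.1).add (hasFDerivAt_snd.mul_const v.2))
  rw [h.fderiv]
  simp only [Function.comp_apply, smul_add, add_apply, smul_apply,
    ContinuousLinearMap.coe_fst', ContinuousLinearMap.coe_snd', smul_eq_mul]
  ring

theorem lap_comp_fst_sq_add_snd_sq (hg : ∀ s ≥ 0, HasDerivAt g (g' s) s)
    (hg' : ∀ s ≥ 0, HasDerivAt g' (g'' s) s) (x : ℝ × ℝ) :
    lap (fun y => g (y.1 ^ 2 + y.2 ^ 2)) x =
      4 * g' (x.1 ^ 2 + x.2 ^ 2) + 4 * (x.1 ^ 2 + x.2 ^ 2) * g'' (x.1 ^ 2 + x.2 ^ 2) := by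
  rw [lap_apply, fderiv_fderiv_comp_fst_sq_add_snd_sq_apply hg hg',
    fderiv_fderiv_comp_fst_sq_add_snd_sq_apply hg hg']
  ring

end Laplacian

def regSqLog (ε : ℝ) (x : ℝ × ℝ) : ℝ :=
  (x.1 ^ 2 + x.2 ^ 2 + ε ^ 2) * log (x.1 ^ 2 + x.2 ^ 2 + ε ^ 2)

theorem vbar_eq_mul_regSqLog (E ν : ℝ) (x : ℝ × ℝ) :
    vbar E ν x = E / (1 - ν ^ 2) / (16 * π) * regSqLog 0 x := by
  unfold vbar regSqLog
  split_ifs with hx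
  · simp [hx]
  · rw [zero_pow two_ne_zero, add_zero]
    ring

section Regularization

variable {ε : ℝ}

theorem contDiff_regSqLog (hε : ε ≠ 0) {n : WithTop ℕ∞} : ContDiff ℝ n (regSqLog ε) := by
  have hu : ContDiff ℝ n fun x : ℝ × ℝ => x.1 ^ 2 + x.2 ^ 2 + ε ^ 2 := by fun_prop
  exact hu.mul (hu.log fun x => by positivity)

theorem lap_regSqLog (hε : ε ≠ 0) :
    lap (regSqLog ε) = fun x =>
      4 * log (x.1 ^ 2 + x.2 ^ 2 + ε ^ 2) + 8 - 4 * ε ^ 2 / (x.1 ^ 2 + x.2 ^ 2 + ε ^ 2) := by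
  have hpos : ∀ s ≥ (0 : ℝ), s + ε ^ 2 ≠ 0 := fun s hs => by positivity
  have hu : ∀ s : ℝ, HasDerivAt (· + ε ^ 2) 1 s := fun s => (hasDerivAt_id s).add_const _
  funext x
  refine (lap_comp_fst_sq_add_snd_sq (g := fun t => (t + ε ^ 2) * log (t + ε ^ 2))
    (g' := fun t => log (t + ε ^ 2) + 1) (g'' := fun t => 1 / (t + ε ^ 2))
    (fun s hs => ?_) (fun s hs => ?_) x).trans ?_
  · exact ((hu s).mul ((hu s).log (hpos s hs))).congr_deriv (by field_simp)
  · exact ((hu s).log (hpos s hs)).add_const 1 |>.congr_deriv (by simp)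
  · have := hpos _ (by positivity : x.1 ^ 2 + x.2 ^ 2 ≥ 0)
    field_simp
    ring

theorem lap_lap_regSqLog (hε : ε ≠ 0) :
    lap (lap (regSqLog ε)) = fun x => 32 * ε ^ 4 / (x.1 ^ 2 + x.2 ^ 2 + ε ^ 2) ^ 3 := by
  have hpos : ∀ s ≥ (0 : ℝ), s + ε ^ 2 ≠ 0 := fun s hs => by positivity
  have hu : ∀ s : ℝ, HasDerivAt (· + ε ^ 2) 1 s := fun s => (hasDerivAt_id s).add_const _
  funext x
  rw [lap_regSqLog hε]
  refine (lap_comp_fst_sq_add_snd_sq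
    (g := fun t => 4 * log (t + ε ^ 2) + 8 - 4 * ε ^ 2 / (t + ε ^ 2))
    (g' := fun t => 4 / (t + ε ^ 2) + 4 * ε ^ 2 / (t + ε ^ 2) ^ 2)
    (g'' := fun t => -4 / (t + ε ^ 2) ^ 2 - 8 * ε ^ 2 / (t + ε ^ 2) ^ 3)
    (fun s hs => ?_) (fun s hs => ?_) x).trans ?_
  · exact ((((hu s).log (hpos s hs)).const_mul 4).add_const 8).sub
      ((hasDerivAt_const s _).div (hu s) (hpos s hs)) |>.congr_deriv (by field_simp; ring)
  · exact (((hasDerivAt_const s _).div (hu s) (hpos s hs)).add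
      ((hasDerivAt_const s _).div ((hu s).pow 2) (pow_ne_zero 2 (hpos s hs)))).congr_deriv
      (by simp only [Pi.pow_apply]; field_simp; ring)
  · have := hpos _ (by positivity : x.1 ^ 2 + x.2 ^ 2 ≥ 0)
    field_simp
    ring

end Regularization

def bilapKernel (y : ℝ × ℝ) : ℝ := 2 / (π * (y.1 ^ 2 + y.2 ^ 2 + 1) ^ 3)

theorem bilapKernel_nonneg (y : ℝ × ℝ) : 0 ≤ bilapKernel y := by
  unfold bilapKernel; positivity

theorem integral_Ioi_radial_bilapKernel :
    ∫ r in Ioi (0 : ℝ), r * (2 / (π * (r ^ 2 + 1) ^ 3)) = 1 / (2 * π) := by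
  have hderiv : ∀ r ∈ Ici (0 : ℝ), HasDerivAt (fun r => -1 / (2 * π * (r ^ 2 + 1) ^ 2))
      (r * (2 / (π * (r ^ 2 + 1) ^ 3))) r := fun r _ => by
    have := (hasDerivAt_const r (-1 : ℝ)).div
      ((((hasDerivAt_pow 2 r).add_const 1).pow 2).const_mul (2 * π))
      (by simp only [Pi.pow_apply]; positivity)
    refine this.congr_deriv ?_
    simp only [Pi.pow_apply]
    field_simp
    ring
  have hlim : Tendsto (fun r : ℝ => -1 / (2 * π * (r ^ 2 + 1) ^ 2)) atTop (𝓝 0) :=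
    tendsto_const_nhds.div_atTop <| ((tendsto_pow_atTop two_ne_zero).comp
      (tendsto_atTop_add_const_right _ 1 (tendsto_pow_atTop two_ne_zero))).const_mul_atTop
      (by positivity)
  rw [integral_Ioi_of_hasDerivAt_of_nonneg' hderiv (fun r hr => by
    have : (0 : ℝ) < r := hr; positivity) hlim]
  ring

theorem integral_bilapKernel : ∫ y, bilapKernel y = 1 := by
  rw [← integral_comp_polarCoord_symm, polarCoord_target, Measure.volume_eq_prod]
  have hpolar : ∀ p : ℝ × ℝ, p.1 • bilapKernel (polarCoord.symm p) =
      p.1 * (2 / (π * (p.1 ^ 2 + 1) ^ 3)) * 1 := fun p => by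
    simp only [polarCoord_symm_apply, bilapKernel, smul_eq_mul, mul_one, mul_pow,
      ← mul_add, cos_sq_add_sin_sq]
  simp_rw [hpolar]
  rw [setIntegral_prod_mul (fun r => r * (2 / (π * (r ^ 2 + 1) ^ 3))) (fun _ => 1),
    integral_Ioi_radial_bilapKernel, setIntegral_const,
    Real.volume_real_Ioo_of_le (by linarith [pi_pos])]
  field_simp
  ring

/-- The norm on `ℝ × ℝ` is the sup norm, not the Euclidean one. -/
theorem sq_norm_le_fst_sq_add_snd_sq (y : ℝ × ℝ) : ‖y‖ ^ 2 ≤ y.1 ^ 2 + y.2 ^ 2 := by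
  rw [Prod.norm_def, Real.norm_eq_abs, Real.norm_eq_abs]
  rcases max_cases |y.1| |y.2| with ⟨h, _⟩ | ⟨h, _⟩ <;> rw [h, sq_abs] <;>
    linarith [sq_nonneg y.1, sq_nonneg y.2]

theorem tendsto_sq_norm_mul_bilapKernel :
    Tendsto (fun y => ‖y‖ ^ 2 * bilapKernel y) (Bornology.cobounded (ℝ × ℝ)) (𝓝 0) := by
  have hdecay : Tendsto (fun t : ℝ => 2 / (π * (t ^ 2 + 1) ^ 2)) atTop (𝓝 0) :=
    tendsto_const_nhds.div_atTop <| ((tendsto_pow_atTop two_ne_zero).comp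
      (tendsto_atTop_add_const_right _ 1 (tendsto_pow_atTop two_ne_zero))).const_mul_atTop pi_pos
  refine tendsto_of_tendsto_of_tendsto_of_le_of_le tendsto_const_nhds
    (hdecay.comp tendsto_norm_cobounded_atTop) (fun y => by positivity [bilapKernel_nonneg y])
    fun y => ?_
  have hy := sq_norm_le_fst_sq_add_snd_sq y
  simp only [Function.comp, bilapKernel]
  calc ‖y‖ ^ 2 * (2 / (π * (y.1 ^ 2 + y.2 ^ 2 + 1) ^ 3))
      ≤ (y.1 ^ 2 + y.2 ^ 2 + 1) * (2 / (π * (y.1 ^ 2 + y.2 ^ 2 + 1) ^ 3)) := by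
        gcongr; linarith
    _ = 2 / (π * (y.1 ^ 2 + y.2 ^ 2 + 1) ^ 2) := by field_simp
    _ ≤ 2 / (π * (‖y‖ ^ 2 + 1) ^ 2) := by gcongr

theorem tendsto_integral_regSqLog_inv_mul_lap_lap {φ : ℝ × ℝ → ℝ} (hφ : ContDiff ℝ 4 φ)
    (hφs : HasCompactSupport φ) :
    Tendsto (fun c : ℝ => ∫ x, regSqLog c⁻¹ x * lap (lap φ) x) atTop (𝓝 (16 * π * φ 0)) := by
  have hfinrank : Module.finrank ℝ (ℝ × ℝ) = 2 := by simp
  have hpeak := tendsto_integral_comp_smul_smul_of_integrable (μ := volume) bilapKernel_nonneg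
    integral_bilapKernel (hfinrank ▸ tendsto_sq_norm_mul_bilapKernel)
    (hφ.continuous.integrable_of_hasCompactSupport hφs) hφ.continuous.continuousAt
  refine (hpeak.const_mul (16 * π)).congr' ?_
  filter_upwards [eventually_gt_atTop 0] with c hc
  rw [integral_mul_lap_lap_eq (contDiff_regSqLog (inv_ne_zero hc.ne')) hφ hφs,
    lap_lap_regSqLog (inv_ne_zero hc.ne'), ← integral_const_mul]
  congr 1 with x
  simp only [hfinrank, bilapKernel, smul_eq_mul, Prod.smul_fst, Prod.smul_snd]
  field_simp
  ring

theorem integral_regSqLog_zero_mul_lap_lap {φ : ℝ × ℝ → ℝ} (hφ : ContDiff ℝ 4 φ)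
    (hφs : HasCompactSupport φ) : ∫ x, regSqLog 0 x * lap (lap φ) x = 16 * π * φ 0 := by
  have hregSqLog : Continuous (Function.uncurry regSqLog) :=
    continuous_mul_log.comp (by fun_prop)
  have hcont := continuous_integral_mul_of_hasCompactSupport (μ := volume) hregSqLog
    ((hφ.lap (m := 2) (by norm_num)).lap (m := 0) (by norm_num)).continuous hφs.lap.lap
  exact tendsto_nhds_unique ((hcont.tendsto 0).comp tendsto_inv_atTop_zero)
    (tendsto_integral_regSqLog_inv_mul_lap_lap hφ hφs)

/-- `v̄` is a fundamental solution at the origin of the bilaplacian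
equation `((1−ν²)/E)·Δ²v = δ₀` in the sense of distributions. -/
theorem vbar_fundamental_solution (E ν : ℝ) (hE : 0 < E) (hν₁ : -1 < ν) (hν₂ : ν < 1/2)
    (φ : ℝ × ℝ → ℝ) (hφ : ContDiff ℝ (⊤ : ℕ∞) φ) (hφc : HasCompactSupport φ) :
    ((1 - ν^2)/E) * ∫ x : ℝ × ℝ, vbar E ν x * lap (lap φ) x = φ 0 := by
  have hν : 1 - ν ^ 2 ≠ 0 := by nlinarith
  simp_rw [vbar_eq_mul_regSqLog, mul_assoc, integral_const_mul,
    integral_regSqLog_zero_mul_lap_lap (hφ.of_le (by norm_cast)) hφc]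
  field_simp
end
end

section
/- Let s ∈ ℝ. For every x ∈ ℝ² with x ≠ 0, the quotient v̄_h(x)/h converges, as h → 0⁺, to v̄'(x) = (E/(1−ν²))·(s/(8π))·(x₁·log(|x|²) + x₁). -/
open Real MeasureTheory Filter

noncomputable section

/-! `v̄_h(x)/h` is `s` times the centred difference quotient, with step `h`, of `v̄` along the
first coordinate axis at `x`. Away from the origin `v̄` is differentiable, so this quotient tends
to `s ∂₁v̄(x)`, and `∂₁(|x|² log |x|²) = 2x₁ (log |x|² + 1)`. -/

open Topology

theorem HasDerivAt.tendsto_centered_slope_zero {F : Type*} [NormedAddCommGroup F]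
    [NormedSpace ℝ F] {f : ℝ → F} {f' : F} {a : ℝ} (hf : HasDerivAt f f' a) :
    Tendsto (fun h : ℝ => h⁻¹ • (f (a + h / 2) - f (a - h / 2))) (𝓝[≠] 0) (𝓝 f') := by
  have hplus : HasDerivAt (fun h : ℝ => f (a + h / 2)) ((1 / 2 : ℝ) • f') 0 := by
    have := ((hasDerivAt_id (0 : ℝ)).div_const 2).const_add a
    simpa [Function.comp_def] using hf.scomp_of_eq 0 this (by simp)
  have hminus : HasDerivAt (fun h : ℝ => f (a - h / 2)) (-(1 / 2 : ℝ) • f') 0 := by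
    have := ((hasDerivAt_id (0 : ℝ)).div_const 2).const_sub a
    simpa [Function.comp_def] using hf.scomp_of_eq 0 this (by simp)
  have hdiff := (hplus.sub hminus).tendsto_slope_zero
  rw [neg_smul, sub_neg_eq_add, ← add_smul, add_halves, one_smul] at hdiff
  simpa using hdiff

theorem vbar_eq_of_ne_zero (E ν : ℝ) {x : ℝ × ℝ} (hx : x ≠ 0) :
    vbar E ν x = E / (1 - ν ^ 2) / (16 * π) *
      ((x.1 ^ 2 + x.2 ^ 2) * Real.log (x.1 ^ 2 + x.2 ^ 2)) := by
  rw [vbar, if_neg hx]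
  ring

theorem hasDerivAt_vbar_add_fst (E ν : ℝ) {x : ℝ × ℝ} (hx : x ≠ 0) :
    HasDerivAt (fun t : ℝ => vbar E ν (x + (t, 0)))
      (E / (1 - ν ^ 2) / (8 * π) * (x.1 * Real.log (x.1 ^ 2 + x.2 ^ 2) + x.1)) 0 := by
  set q : ℝ → ℝ := fun t => (x.1 + t) ^ 2 + x.2 ^ 2
  have hq0 : q 0 ≠ 0 := by
    intro h0
    obtain ⟨h1, h2⟩ := mul_self_add_mul_self_eq_zero.mp (by simpa [q, sq] using h0)
    exact hx (Prod.ext h1 h2)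
  have hq : HasDerivAt q (2 * x.1) 0 := by
    simpa [q] using (((hasDerivAt_id (0 : ℝ)).const_add x.1).pow 2).add_const (x.2 ^ 2)
  have hqlogq := ((Real.hasDerivAt_mul_log hq0).comp 0 hq).const_mul (E / (1 - ν ^ 2) / (16 * π))
  have hnear : ∀ᶠ t in 𝓝 (0 : ℝ), x + (t, 0) ≠ 0 := by
    have : Continuous fun t : ℝ => x + (t, (0 : ℝ)) := by fun_prop
    exact (this.tendsto' 0 x (by simp)).eventually_ne hx
  refine (hqlogq.congr_deriv ?_).congr_of_eventuallyEq ?_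
  · simp only [q, add_zero]
    ring
  · filter_upwards [hnear] with t ht
    simp [vbar_eq_of_ne_zero E ν ht, q]

theorem dipole_pointwise_limit_general (E ν : ℝ) (s : ℝ) (x : ℝ × ℝ) (hx : x ≠ 0) :
    Tendsto (fun h : ℝ => vbarh E ν s h x / h) (nhdsWithin 0 (Set.Ioi 0))
      (nhds ((E/(1-ν^2)) * (s/(8*π)) * (x.1 * Real.log (x.1^2 + x.2^2) + x.1))) := by
  set φ : ℝ → ℝ := fun t => vbar E ν (x + (t, 0))
  have hφ := ((hasDerivAt_vbar_add_fst E ν hx).tendsto_centered_slope_zero.mono_left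
    (nhdsGT_le_nhdsNE 0)).const_mul s
  have hquot : ∀ h : ℝ, vbarh E ν s h x / h = s * (h⁻¹ • (φ (0 + h / 2) - φ (0 - h / 2))) := by
    intro h
    have hsub : x - (h / 2, 0) = x + (0 - h / 2, 0) := by ext <;> simp [sub_eq_add_neg]
    rw [vbarh, hsub, smul_eq_mul]
    simp only [φ, zero_add]
    ring
  simp_rw [hquot]
  convert hφ using 2
  ring

/-- For every `x ≠ 0`, `v̄_h(x)/h → v̄'(x)` as `h → 0⁺`, where
`v̄'(x) = (E/(1−ν²))·(s/(8π))·(x₁ log|x|² + x₁)`. -/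
theorem dipole_pointwise_limit (E ν : ℝ) (hE : 0 < E) (hν₁ : -1 < ν) (hν₂ : ν < 1/2)
    (s : ℝ) (x : ℝ × ℝ) (hx : x ≠ 0) :
    Tendsto (fun h : ℝ => vbarh E ν s h x / h) (nhdsWithin 0 (Set.Ioi 0))
      (nhds ((E/(1-ν^2)) * (s/(8*π)) * (x.1 * Real.log (x.1^2 + x.2^2) + x.1))) :=
  dipole_pointwise_limit_general E ν s x hx
end
end

section
/- Let s ∈ ℝ and 0 < r < R. Then the rescaled squared H²-norm of the dipole Airy function on the annulus converges: as h → 0⁺ (with h < r), (1/h²) · ∫_{A_{r,R}(0)} (v̄_h(x)² + |∇v̄_h(x)|² + |∇²v̄_h(x)|²) dx converges to ∫_{A_{r,R}(0)} (v̄'(x)² + |∇v̄'(x)|² + |∇²v̄'(x)|²) dx. In particular the limit is of the form C(r,R)·s² for a finite positive constant C(r,R) depending only on r, R, E, ν. -/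
/-!
With `q x = |x|² log |x|²` and `k = E / ((1 - ν²) 16π)`, the dipole is `v̄_h = s k h · D_h q`,
where `D_h` is the central difference quotient in `x₁`. For `h < r` the singular points
`±(h/2, 0)` stay outside a compact shell around the annulus on which `q` is smooth, so every
derivative of order at most two of `D_h q` is `D_h` of that derivative of `q`. These difference
quotients converge to the `∂₁`-derivatives and are uniformly bounded by the mean value theorem,
so dominated convergence gives the limit `(s k)² ∫ |(∂₁ q, ∇∂₁ q, ∇²∂₁ q)|²` (symmetry of second
derivatives matches the Hessian terms), and `v̄' = s k ∂₁ q`. The constant is positive because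
`∂₁ q = 2 x₁ (log |x|² + 1)` does not vanish identically on the annulus.
-/

open Real MeasureTheory Filter

noncomputable section

open Topology Set
open scoped ContDiff

def h2Sq (f : ℝ × ℝ → ℝ) (x : ℝ × ℝ) : ℝ := (f x)^2 + gradSq f x + hessSq f x

/-- What `h2Sq (D f) x` becomes once an operator `D` has been commuted past the partial
derivatives: `D` is applied to `f` and to its first and second partial derivatives. -/
def h2SqOp (D : (ℝ × ℝ → ℝ) → ℝ × ℝ → ℝ) (f : ℝ × ℝ → ℝ) (x : ℝ × ℝ) : ℝ :=
  (D f x)^2 + ((D (pd1 f) x)^2 + (D (pd2 f) x)^2) +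
    ((D (pd1 (pd1 f)) x)^2 + (D (pd1 (pd2 f)) x)^2 + (D (pd2 (pd1 f)) x)^2 +
      (D (pd2 (pd2 f)) x)^2)

def centralDiff (h : ℝ) (f : ℝ × ℝ → ℝ) (x : ℝ × ℝ) : ℝ :=
  (f (x + (h/2, 0)) - f (x - (h/2, 0))) / h

theorem h2SqOp_nonneg (D : (ℝ × ℝ → ℝ) → ℝ × ℝ → ℝ) (f : ℝ × ℝ → ℝ) (x : ℝ × ℝ) :
    0 ≤ h2SqOp D f x := by
  unfold h2SqOp; positivity

section PartialDerivatives

variable {f g : ℝ × ℝ → ℝ} {U : Set (ℝ × ℝ)} {x : ℝ × ℝ}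

theorem ContDiffOn.fderiv_apply_of_isOpen (hf : ContDiffOn ℝ ∞ f U) (hU : IsOpen U)
    (v : ℝ × ℝ) : ContDiffOn ℝ ∞ (fun y => fderiv ℝ f y v) U :=
  (hf.fderiv_of_isOpen hU (by simp)).clm_apply contDiffOn_const

theorem ContDiffOn.pd1 (hf : ContDiffOn ℝ ∞ f U) (hU : IsOpen U) : ContDiffOn ℝ ∞ (pd1 f) U :=
  hf.fderiv_apply_of_isOpen hU (1, 0)

theorem ContDiffOn.pd2 (hf : ContDiffOn ℝ ∞ f U) (hU : IsOpen U) : ContDiffOn ℝ ∞ (pd2 f) U :=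
  hf.fderiv_apply_of_isOpen hU (0, 1)

theorem Filter.EventuallyEq.fderiv_apply (h : f =ᶠ[𝓝 x] g) (v : ℝ × ℝ) :
    (fun y => fderiv ℝ f y v) =ᶠ[𝓝 x] fun y => fderiv ℝ g y v :=
  (h.fderiv (𝕜 := ℝ)).mono fun y hy => by simp only [hy]

theorem h2Sq_congr (h : f =ᶠ[𝓝 x] g) : h2Sq f x = h2Sq g x := by
  have h1 : pd1 f =ᶠ[𝓝 x] pd1 g := h.fderiv_apply (1, 0)
  have h2 : pd2 f =ᶠ[𝓝 x] pd2 g := h.fderiv_apply (0, 1)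
  have h11 : pd1 (pd1 f) x = pd1 (pd1 g) x := (h1.fderiv_apply (1, 0)).eq_of_nhds
  have h12 : pd1 (pd2 f) x = pd1 (pd2 g) x := (h2.fderiv_apply (1, 0)).eq_of_nhds
  have h21 : pd2 (pd1 f) x = pd2 (pd1 g) x := (h1.fderiv_apply (0, 1)).eq_of_nhds
  have h22 : pd2 (pd2 f) x = pd2 (pd2 g) x := (h2.fderiv_apply (0, 1)).eq_of_nhds
  rw [h2Sq, h2Sq, gradSq, gradSq, hessSq, hessSq, h.eq_of_nhds, h1.eq_of_nhds, h2.eq_of_nhds,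
    h11, h12, h21, h22]

theorem pd1_const_mul (c : ℝ) : pd1 (fun y => c * f y) = fun y => c * pd1 f y := by
  funext y
  simp only [pd1, ← smul_eq_mul, ← Pi.smul_def, fderiv_const_smul_field]
  rfl

theorem pd2_const_mul (c : ℝ) : pd2 (fun y => c * f y) = fun y => c * pd2 f y := by
  funext y
  simp only [pd2, ← smul_eq_mul, ← Pi.smul_def, fderiv_const_smul_field]
  rfl

theorem h2Sq_const_mul (c : ℝ) : h2Sq (fun y => c * f y) x = c^2 * h2Sq f x := by
  simp only [h2Sq, gradSq, hessSq, pd1_const_mul, pd2_const_mul]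
  ring

theorem pd1_pd2_eq_pd2_pd1 (hf : ContDiffAt ℝ 2 f x) : pd1 (pd2 f) x = pd2 (pd1 f) x := by
  have hd : DifferentiableAt ℝ (fderiv ℝ f) x :=
    (hf.fderiv_right (m := 1) (by norm_num)).differentiableAt one_ne_zero
  have hsymm := hf.isSymmSndFDerivAt (by simp) (1, 0) (0, 1)
  change fderiv ℝ (fun y => fderiv ℝ f y (0, 1)) x (1, 0) =
    fderiv ℝ (fun y => fderiv ℝ f y (1, 0)) x (0, 1)
  rw [fderiv_clm_apply hd (differentiableAt_const _),
    fderiv_clm_apply hd (differentiableAt_const _)]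
  simpa using hsymm

theorem pd1_pd2_eventuallyEq (hf : ContDiffOn ℝ ∞ f U) (hU : IsOpen U) (hx : x ∈ U) :
    pd1 (pd2 f) =ᶠ[𝓝 x] pd2 (pd1 f) :=
  eventually_of_mem (hU.mem_nhds hx) fun _ hy =>
    pd1_pd2_eq_pd2_pd1 ((hf.contDiffAt (hU.mem_nhds hy)).of_le (by norm_cast))

theorem h2Sq_pd1 (hf : ContDiffOn ℝ ∞ f U) (hU : IsOpen U) (hx : x ∈ U) :
    h2Sq (pd1 f) x = h2SqOp pd1 f x := by
  have hsymm := pd1_pd2_eventuallyEq hf hU hx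
  have h₀ : pd1 (pd2 f) x = pd2 (pd1 f) x := hsymm.eq_of_nhds
  have h₁ : pd1 (pd1 (pd2 f)) x = pd1 (pd2 (pd1 f)) x := (hsymm.fderiv_apply (1, 0)).eq_of_nhds
  have h₂ : pd2 (pd1 (pd2 f)) x = pd2 (pd2 (pd1 f)) x := (hsymm.fderiv_apply (0, 1)).eq_of_nhds
  have h₃ : pd1 (pd2 (pd1 f)) x = pd2 (pd1 (pd1 f)) x :=
    (pd1_pd2_eventuallyEq (hf.pd1 hU) hU hx).eq_of_nhds
  have h₄ : pd1 (pd2 (pd2 f)) x = pd2 (pd1 (pd2 f)) x :=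
    (pd1_pd2_eventuallyEq (hf.pd2 hU) hU hx).eq_of_nhds
  rw [h2Sq, h2SqOp, gradSq, hessSq, h₀, h₁, h₄, h₂, h₃]

theorem continuousOn_h2SqOp_pd1 (hf : ContDiffOn ℝ ∞ f U) (hU : IsOpen U) :
    ContinuousOn (h2SqOp pd1 f) U := by
  have c : ∀ {g : ℝ × ℝ → ℝ}, ContDiffOn ℝ ∞ g U → ContinuousOn (fun x => pd1 g x ^ 2) U :=
    fun hg => (hg.pd1 hU).continuousOn.pow 2
  exact ((c hf).add ((c (hf.pd1 hU)).add (c (hf.pd2 hU)))).add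
    ((((c ((hf.pd1 hU).pd1 hU)).add (c ((hf.pd2 hU).pd1 hU))).add
      (c ((hf.pd1 hU).pd2 hU))).add (c ((hf.pd2 hU).pd2 hU)))

theorem hasDerivAt_comp_add_fst {t : ℝ} (hf : DifferentiableAt ℝ f (x + (t, 0))) :
    HasDerivAt (fun t => f (x + (t, 0))) (pd1 f (x + (t, 0))) t := by
  have hline : HasDerivAt (fun t : ℝ => x + (t, 0)) ((1 : ℝ), (0 : ℝ)) t :=
    ((hasDerivAt_id t).prodMk (hasDerivAt_const t (0 : ℝ))).const_add x
  exact hf.hasFDerivAt.comp_hasDerivAt t hline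

end PartialDerivatives

section CentralDifference

variable {f : ℝ × ℝ → ℝ} {U K : Set (ℝ × ℝ)} {x : ℝ × ℝ} {h : ℝ}

theorem fderiv_centralDiff_apply (hp : DifferentiableAt ℝ f (x + (h/2, 0)))
    (hm : DifferentiableAt ℝ f (x - (h/2, 0))) (v : ℝ × ℝ) :
    fderiv ℝ (centralDiff h f) x v = centralDiff h (fun y => fderiv ℝ f y v) x := by
  have hd : HasFDerivAt (fun y => f (y + (h/2, 0)) - f (y - (h/2, 0)))
      (fderiv ℝ f (x + (h/2, 0)) - fderiv ℝ f (x - (h/2, 0))) x :=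
    ((hasFDerivAt_comp_add_right _).2 hp.hasFDerivAt).sub
      ((hasFDerivAt_comp_sub _).2 hm.hasFDerivAt)
  rw [show centralDiff h f = fun y => (f (y + (h/2, 0)) - f (y - (h/2, 0))) * h⁻¹ by
    funext y; exact div_eq_mul_inv _ _, (hd.mul_const h⁻¹).fderiv]
  simp [centralDiff, div_eq_mul_inv, mul_comm]

theorem fderiv_centralDiff_eventuallyEq (hf : DifferentiableOn ℝ f U) (hU : IsOpen U)
    (hp : x + (h/2, 0) ∈ U) (hm : x - (h/2, 0) ∈ U) (v : ℝ × ℝ) :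
    (fun y => fderiv ℝ (centralDiff h f) y v) =ᶠ[𝓝 x] centralDiff h (fun y => fderiv ℝ f y v) := by
  have hp' := (continuous_add_const _).continuousAt.preimage_mem_nhds (hU.mem_nhds hp)
  have hm' := (continuous_id.sub continuous_const).continuousAt.preimage_mem_nhds (hU.mem_nhds hm)
  filter_upwards [hp', hm'] with y hyp hym
  exact fderiv_centralDiff_apply (hf.differentiableAt (hU.mem_nhds hyp))
    (hf.differentiableAt (hU.mem_nhds hym)) v

theorem h2Sq_centralDiff (hf : ContDiffOn ℝ ∞ f U) (hU : IsOpen U)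
    (hp : x + (h/2, 0) ∈ U) (hm : x - (h/2, 0) ∈ U) :
    h2Sq (centralDiff h f) x = h2SqOp (centralDiff h) f x := by
  have hdiff : ∀ {g : ℝ × ℝ → ℝ}, ContDiffOn ℝ ∞ g U → DifferentiableOn ℝ g U :=
    fun hg => hg.differentiableOn (by simp)
  have h1 : pd1 (centralDiff h f) =ᶠ[𝓝 x] centralDiff h (pd1 f) :=
    fderiv_centralDiff_eventuallyEq (hdiff hf) hU hp hm (1, 0)
  have h2 : pd2 (centralDiff h f) =ᶠ[𝓝 x] centralDiff h (pd2 f) :=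
    fderiv_centralDiff_eventuallyEq (hdiff hf) hU hp hm (0, 1)
  have h11 : pd1 (pd1 (centralDiff h f)) x = centralDiff h (pd1 (pd1 f)) x :=
    ((h1.fderiv_apply (1, 0)).eq_of_nhds).trans
      ((fderiv_centralDiff_eventuallyEq (hdiff (hf.pd1 hU)) hU hp hm (1, 0)).eq_of_nhds)
  have h12 : pd1 (pd2 (centralDiff h f)) x = centralDiff h (pd1 (pd2 f)) x :=
    ((h2.fderiv_apply (1, 0)).eq_of_nhds).trans
      ((fderiv_centralDiff_eventuallyEq (hdiff (hf.pd2 hU)) hU hp hm (1, 0)).eq_of_nhds)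
  have h21 : pd2 (pd1 (centralDiff h f)) x = centralDiff h (pd2 (pd1 f)) x :=
    ((h1.fderiv_apply (0, 1)).eq_of_nhds).trans
      ((fderiv_centralDiff_eventuallyEq (hdiff (hf.pd1 hU)) hU hp hm (0, 1)).eq_of_nhds)
  have h22 : pd2 (pd2 (centralDiff h f)) x = centralDiff h (pd2 (pd2 f)) x :=
    ((h2.fderiv_apply (0, 1)).eq_of_nhds).trans
      ((fderiv_centralDiff_eventuallyEq (hdiff (hf.pd2 hU)) hU hp hm (0, 1)).eq_of_nhds)
  rw [h2Sq, h2SqOp, gradSq, hessSq, h1.eq_of_nhds, h2.eq_of_nhds, h11, h12, h21, h22]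

theorem tendsto_centralDiff (hf : DifferentiableAt ℝ f x) :
    Tendsto (fun h => centralDiff h f x) (𝓝[≠] 0) (𝓝 (pd1 f x)) := by
  have hg := hasDerivAt_comp_add_fst (f := f) (x := x) (t := 0)
    (by rwa [Prod.mk_zero_zero, add_zero])
  simp only [Prod.mk_zero_zero, add_zero] at hg
  have hscale : ∀ c : ℝ, c ≠ 0 → Tendsto (fun h => c * h) (𝓝[≠] 0) (𝓝[≠] 0) := fun c hc =>
    le_of_eq (by simpa using (Homeomorph.mulLeft₀ c hc).map_punctured_nhds_eq 0)
  have hslope := hg.tendsto_slope_zero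
  -- the central quotient is the mean of the one-sided slopes at `h/2` and `-h/2`
  have hmean := ((hslope.comp (hscale (1/2) (by norm_num))).add
    (hslope.comp (hscale (-1/2) (by norm_num)))).div_const 2
  rw [add_self_div_two] at hmean
  refine hmean.congr' (eventually_mem_nhdsWithin.mono fun h hh => ?_)
  have hh : h ≠ 0 := hh
  simp only [Function.comp_apply, centralDiff, smul_eq_mul, zero_add]
  have e : x - (h/2, 0) = x + (-1/2 * h, 0) := by ext <;> simp; ring
  rw [e, show h/2 = 1/2 * h by ring]
  field_simp
  ring

theorem abs_centralDiff_le {M : ℝ} (hh : 0 < h)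
    (hf : ∀ t ∈ Icc (-(h/2)) (h/2), DifferentiableAt ℝ f (x + (t, 0)))
    (hM : ∀ t ∈ Icc (-(h/2)) (h/2), |pd1 f (x + (t, 0))| ≤ M) :
    |centralDiff h f x| ≤ M := by
  have hmvt := norm_image_sub_le_of_norm_deriv_le_segment'
    (fun t ht => (hasDerivAt_comp_add_fst (hf t ht)).hasDerivWithinAt)
    (fun t ht => hM t (Ico_subset_Icc_self ht)) (h/2) (right_mem_Icc.2 (by linarith))
  have e : x - (h/2, 0) = x + (-(h/2), 0) := by ext <;> simp [sub_eq_add_neg]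
  rw [centralDiff, e, abs_div, abs_of_pos hh, div_le_iff₀ hh]
  simpa [Real.norm_eq_abs, show h/2 - -(h/2) = h by ring] using hmvt

theorem tendsto_h2SqOp_centralDiff (hf : ContDiffOn ℝ ∞ f U) (hU : IsOpen U) (hx : x ∈ U) :
    Tendsto (fun h => h2SqOp (centralDiff h) f x) (𝓝[≠] 0) (𝓝 (h2SqOp pd1 f x)) := by
  have T : ∀ {g : ℝ × ℝ → ℝ}, ContDiffOn ℝ ∞ g U →
      Tendsto (fun h => centralDiff h g x ^ 2) (𝓝[≠] 0) (𝓝 (pd1 g x ^ 2)) := fun hg =>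
    (tendsto_centralDiff ((hg.differentiableOn (by simp)).differentiableAt
      (hU.mem_nhds hx))).pow 2
  exact ((T hf).add ((T (hf.pd1 hU)).add (T (hf.pd2 hU)))).add
    ((((T ((hf.pd1 hU).pd1 hU)).add (T ((hf.pd2 hU).pd1 hU))).add
      (T ((hf.pd1 hU).pd2 hU))).add (T ((hf.pd2 hU).pd2 hU)))

theorem exists_sq_centralDiff_le (hf : ContDiffOn ℝ ∞ f U) (hU : IsOpen U) (hK : IsCompact K)
    (hKU : K ⊆ U) : ∃ C, ∀ x h, 0 < h → (∀ t ∈ Icc (-(h/2)) (h/2), x + (t, 0) ∈ K) →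
      centralDiff h f x ^ 2 ≤ C := by
  obtain ⟨M, hM⟩ := hK.exists_bound_of_continuousOn ((hf.pd1 hU).continuousOn.mono hKU)
  refine ⟨M ^ 2, fun x h hh hxK => ?_⟩
  have hle := abs_centralDiff_le hh
    (fun t ht => (hf.differentiableOn (by simp)).differentiableAt (hU.mem_nhds (hKU (hxK t ht))))
    (fun t ht => hM _ (hxK t ht))
  simpa only [sq_abs] using pow_le_pow_left₀ (abs_nonneg _) hle 2

theorem exists_h2SqOp_centralDiff_le (hf : ContDiffOn ℝ ∞ f U) (hU : IsOpen U)
    (hK : IsCompact K) (hKU : K ⊆ U) :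
    ∃ B, ∀ x h, 0 < h → (∀ t ∈ Icc (-(h/2)) (h/2), x + (t, 0) ∈ K) →
      h2SqOp (centralDiff h) f x ≤ B := by
  obtain ⟨C₀, h₀⟩ := exists_sq_centralDiff_le hf hU hK hKU
  obtain ⟨C₁, h₁⟩ := exists_sq_centralDiff_le (hf.pd1 hU) hU hK hKU
  obtain ⟨C₂, h₂⟩ := exists_sq_centralDiff_le (hf.pd2 hU) hU hK hKU
  obtain ⟨C₁₁, h₁₁⟩ := exists_sq_centralDiff_le ((hf.pd1 hU).pd1 hU) hU hK hKU
  obtain ⟨C₁₂, h₁₂⟩ := exists_sq_centralDiff_le ((hf.pd2 hU).pd1 hU) hU hK hKU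
  obtain ⟨C₂₁, h₂₁⟩ := exists_sq_centralDiff_le ((hf.pd1 hU).pd2 hU) hU hK hKU
  obtain ⟨C₂₂, h₂₂⟩ := exists_sq_centralDiff_le ((hf.pd2 hU).pd2 hU) hU hK hKU
  refine ⟨C₀ + (C₁ + C₂) + (C₁₁ + C₁₂ + C₂₁ + C₂₂), fun x h hh hxK => ?_⟩
  unfold h2SqOp
  gcongr
  exacts [h₀ x h hh hxK, h₁ x h hh hxK, h₂ x h hh hxK, h₁₁ x h hh hxK, h₁₂ x h hh hxK,
    h₂₁ x h hh hxK, h₂₂ x h hh hxK]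

theorem measurable_centralDiff (hf : Measurable f) (h : ℝ) : Measurable (centralDiff h f) :=
  ((hf.comp (measurable_id.add_const _)).sub (hf.comp (measurable_id.sub_const _))).div_const h

theorem measurable_h2SqOp_centralDiff (hf : Measurable f) (h : ℝ) :
    Measurable (h2SqOp (centralDiff h) f) := by
  have hpd : ∀ (g : ℝ × ℝ → ℝ) (v : ℝ × ℝ), Measurable (centralDiff h fun y => fderiv ℝ g y v) :=
    fun g v => measurable_centralDiff (measurable_fderiv_apply_const ℝ (f := g) v) h
  have h₀ := measurable_centralDiff hf h
  have h₁ := hpd f (1, 0)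
  have h₂ := hpd f (0, 1)
  have h₁₁ := hpd (pd1 f) (1, 0)
  have h₁₂ := hpd (pd2 f) (1, 0)
  have h₂₁ := hpd (pd1 f) (0, 1)
  have h₂₂ := hpd (pd2 f) (0, 1)
  unfold h2SqOp
  fun_prop

theorem tendsto_setIntegral_h2SqOp_centralDiff {A : Set (ℝ × ℝ)} {ρ : ℝ}
    (hf : ContDiffOn ℝ ∞ f U) (hfm : Measurable f) (hU : IsOpen U) (hK : IsCompact K)
    (hKU : K ⊆ U) (hA : MeasurableSet A) (hρ : 0 < ρ)
    (hAK : ∀ x ∈ A, ∀ h ∈ Ioo 0 ρ, ∀ t ∈ Icc (-(h/2)) (h/2), x + (t, 0) ∈ K) :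
    Tendsto (fun h => ∫ x in A, h2SqOp (centralDiff h) f x) (𝓝[Ioo 0 ρ] 0)
      (𝓝 (∫ x in A, h2SqOp pd1 f x)) := by
  have hAK' : A ⊆ K := fun x hx => by
    have h0 := hAK x hx (ρ/2) ⟨half_pos hρ, half_lt_self hρ⟩ 0 ⟨by linarith, by linarith⟩
    rwa [Prod.mk_zero_zero, add_zero] at h0
  obtain ⟨B, hB⟩ := exists_h2SqOp_centralDiff_le hf hU hK hKU
  refine tendsto_integral_filter_of_dominated_convergence (fun _ => B)
    (Eventually.of_forall fun h => (measurable_h2SqOp_centralDiff hfm h).aestronglyMeasurable)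
    (eventually_mem_nhdsWithin.mono fun h hh => ae_restrict_of_forall_mem hA fun x hx => ?_)
    (integrableOn_const (hK.measure_lt_top.trans_le' (measure_mono hAK')).ne)
    (ae_restrict_of_forall_mem hA fun x hx => ?_)
  · rw [Real.norm_of_nonneg (h2SqOp_nonneg _ _ _)]
    exact hB x h hh.1 (hAK x hx h hh)
  · exact (tendsto_h2SqOp_centralDiff hf hU (hKU (hAK' hx))).mono_left
      (nhdsWithin_mono _ fun h hh => hh.1.ne')

end CentralDifference

theorem IsOpen.setIntegral_pos {X : Type*} [TopologicalSpace X] [MeasurableSpace X]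
    [OpensMeasurableSpace X] {μ : Measure X} [μ.IsOpenPosMeasure] {g : X → ℝ} {A : Set X}
    {x₀ : X} (hA : IsOpen A) (hg : ContinuousOn g A) (hgi : IntegrableOn g A μ)
    (hg0 : ∀ x ∈ A, 0 ≤ g x) (hx₀ : x₀ ∈ A) (hpos : 0 < g x₀) : 0 < ∫ x in A, g x ∂μ := by
  rw [setIntegral_pos_iff_support_of_nonneg_ae (ae_restrict_of_forall_mem hA.measurableSet hg0)
    hgi]
  exact ((hg.isOpen_inter_preimage hA isOpen_Ioi).measure_pos μ ⟨x₀, hx₀, hpos⟩).trans_le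
    (measure_mono fun x hx => ⟨(hx.2 : 0 < g x).ne', hx.1⟩)

section Annulus

theorem isOpen_annulus (r R : ℝ) : IsOpen (annulus r R) :=
  (isOpen_lt continuous_const (by fun_prop : Continuous fun x : ℝ × ℝ => x.1^2 + x.2^2)).inter
    (isOpen_lt (by fun_prop : Continuous fun x : ℝ × ℝ => x.1^2 + x.2^2) continuous_const)

def shell (r R : ℝ) : Set (ℝ × ℝ) :=
  {y | (r/2)^2 ≤ y.1^2 + y.2^2} ∩ Metric.closedBall 0 (|R| + r)

theorem isCompact_shell (r R : ℝ) : IsCompact (shell r R) :=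
  (isCompact_closedBall 0 _).inter_left (isClosed_le continuous_const (by fun_prop))

theorem shell_subset_compl_zero {r R : ℝ} (hr : 0 < r) : shell r R ⊆ {0}ᶜ := by
  rintro y ⟨hy, -⟩ rfl
  simp only [mem_ofPred_eq, Prod.fst_zero, Prod.snd_zero] at hy
  nlinarith

theorem add_mem_shell {r R t : ℝ} {x : ℝ × ℝ} (hx : x ∈ annulus r R) (ht : |t| < r/2) :
    x + (t, 0) ∈ shell r R := by
  obtain ⟨hrx, hxR⟩ := hx
  have ht2 : t^2 < (r/2)^2 := sq_lt_sq' (abs_lt.1 ht).1 (abs_lt.1 ht).2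
  constructor
  · simp only [mem_ofPred_eq, Prod.fst_add, Prod.snd_add, add_zero]
    nlinarith [sq_nonneg (x.1 + 2 * t)]
  · have h1 : |x.1| < |R| := sq_lt_sq.1 (by nlinarith [sq_nonneg x.2])
    have h2 : |x.2| < |R| := sq_lt_sq.1 (by nlinarith [sq_nonneg x.1])
    rw [mem_closedBall_zero_iff, Prod.norm_def]
    simp only [Prod.fst_add, Prod.snd_add, add_zero, Real.norm_eq_abs]
    exact max_le (by linarith [abs_add_le x.1 t, abs_nonneg t]) (by linarith [abs_nonneg t])

theorem annulus_subset_shell {r R : ℝ} (hr : 0 < r) : annulus r R ⊆ shell r R := fun x hx => by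
  have h0 := add_mem_shell (t := 0) hx (by simpa using hr)
  rwa [Prod.mk_zero_zero, add_zero] at h0

end Annulus

section Fundamental

def qlogq (x : ℝ × ℝ) : ℝ := (x.1^2 + x.2^2) * log (x.1^2 + x.2^2)

theorem sq_add_sq_ne_zero {x : ℝ × ℝ} (hx : x ≠ 0) : x.1^2 + x.2^2 ≠ 0 := by
  contrapose! hx
  obtain ⟨h1, h2⟩ := (add_eq_zero_iff_of_nonneg (sq_nonneg _) (sq_nonneg _)).1 hx
  exact Prod.ext (pow_eq_zero_iff two_ne_zero |>.1 h1) (pow_eq_zero_iff two_ne_zero |>.1 h2)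

theorem contDiffOn_qlogq : ContDiffOn ℝ ∞ qlogq {0}ᶜ := by
  have hq : ContDiff ℝ ∞ fun x : ℝ × ℝ => x.1^2 + x.2^2 := by fun_prop
  exact hq.contDiffOn.mul (hq.contDiffOn.log fun x hx => sq_add_sq_ne_zero hx)

theorem continuous_qlogq : Continuous qlogq :=
  Real.continuous_mul_log.comp (by fun_prop : Continuous fun x : ℝ × ℝ => x.1^2 + x.2^2)

theorem pd1_qlogq {x : ℝ × ℝ} (hx : x ≠ 0) :
    pd1 qlogq x = 2 * x.1 * (log (x.1^2 + x.2^2) + 1) := by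
  have hq : HasDerivAt (fun t : ℝ => (x + (t, 0)).1^2 + (x + (t, 0)).2^2) (2 * x.1) 0 := by
    have := ((hasDerivAt_id (0 : ℝ)).const_add x.1).pow 2
    simpa using this.add_const (x.2^2)
  have hline := hq.mul (hq.log (by simpa using sq_add_sq_ne_zero hx))
  have hpd := hasDerivAt_comp_add_fst (f := qlogq) (x := x) (t := 0)
    ((contDiffOn_qlogq.differentiableOn (by simp)).differentiableAt
      (isOpen_compl_singleton.mem_nhds (by rwa [Prod.mk_zero_zero, add_zero])))
  simp only [Prod.mk_zero_zero, add_zero] at hpd hline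
  rw [hpd.unique hline]
  have hQ := sq_add_sq_ne_zero hx
  field_simp

theorem exists_mem_annulus_pd1_qlogq_ne_zero {r R : ℝ} (hr : 0 < r) (hrR : r < R) :
    ∃ x ∈ annulus r R, pd1 qlogq x ≠ 0 := by
  have hmem : ∀ ρ, r < ρ → ρ < R → ((ρ, 0) : ℝ × ℝ) ∈ annulus r R := fun ρ h₁ h₂ =>
    ⟨by simp only; nlinarith, by simp only; nlinarith⟩
  have hpd : ∀ ρ, 0 < ρ → pd1 qlogq (ρ, 0) = 2 * ρ * (log (ρ^2) + 1) := fun ρ hρ => by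
    simpa using pd1_qlogq (x := (ρ, 0)) (by simp [hρ.ne'])
  -- `log (ρ^2) + 1` vanishes for at most one `ρ > 0`
  obtain ⟨ρ₁, ρ₂, hrρ, hρρ, hρR⟩ : ∃ ρ₁ ρ₂ : ℝ, r < ρ₁ ∧ ρ₁ < ρ₂ ∧ ρ₂ < R :=
    ⟨(2 * r + R) / 3, (r + 2 * R) / 3, by linarith, by linarith, by linarith⟩
  have hρ₁ : 0 < ρ₁ := hr.trans hrρ
  have hρ₂ : 0 < ρ₂ := hρ₁.trans hρρ
  have hlog : log (ρ₁^2) < log (ρ₂^2) :=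
    log_lt_log (by positivity) (pow_lt_pow_left₀ hρρ (by linarith) two_ne_zero)
  by_cases h₁ : log (ρ₁^2) + 1 = 0
  · refine ⟨(ρ₂, 0), hmem ρ₂ (hrρ.trans hρρ) hρR, ?_⟩
    rw [hpd ρ₂ hρ₂]
    exact (mul_pos (by positivity) (by linarith)).ne'
  · refine ⟨(ρ₁, 0), hmem ρ₁ hrρ (hρρ.trans hρR), ?_⟩
    rw [hpd ρ₁ hρ₁]
    exact mul_ne_zero (by positivity) h₁

theorem setIntegral_h2SqOp_pd1_qlogq_pos {r R : ℝ} (hr : 0 < r) (hrR : r < R) :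
    0 < ∫ x in annulus r R, h2SqOp pd1 qlogq x := by
  have hsub := annulus_subset_shell (R := R) hr
  have hcont := (continuousOn_h2SqOp_pd1 contDiffOn_qlogq isOpen_compl_singleton).mono
    (shell_subset_compl_zero (R := R) hr)
  obtain ⟨x₀, hx₀, hne⟩ := exists_mem_annulus_pd1_qlogq_ne_zero hr hrR
  refine (isOpen_annulus r R).setIntegral_pos (hcont.mono hsub)
    ((hcont.integrableOn_compact (isCompact_shell r R)).mono_set hsub)
    (fun x _ => h2SqOp_nonneg _ _ x) hx₀ ?_
  have : 0 < pd1 qlogq x₀ ^ 2 := by positivity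
  unfold h2SqOp
  positivity

end Fundamental

section Dipole

variable (E ν s : ℝ)

theorem vbar_eq_mul_qlogq : vbar E ν = fun x => E / (1 - ν^2) / (16 * π) * qlogq x := by
  funext x
  by_cases hx : x = 0
  · simp [vbar, qlogq, hx]
  · simp only [vbar, qlogq, if_neg hx]
    ring

theorem h2Sq_vbarh {h : ℝ} {x : ℝ × ℝ} (hh : h ≠ 0) (hp : x + (h/2, 0) ≠ 0)
    (hm : x - (h/2, 0) ≠ 0) :
    h2Sq (vbarh E ν s h) x =
      (s * (E / (1 - ν^2) / (16 * π)) * h)^2 * h2SqOp (centralDiff h) qlogq x := by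
  have hv : vbarh E ν s h =
      fun x => s * (E / (1 - ν^2) / (16 * π)) * h * centralDiff h qlogq x := by
    funext x
    simp only [vbarh, vbar_eq_mul_qlogq, centralDiff]
    field_simp
    ring
  rw [hv, h2Sq_const_mul, h2Sq_centralDiff contDiffOn_qlogq isOpen_compl_singleton hp hm]

theorem h2Sq_dipoleLimit {x : ℝ × ℝ} (hx : x ≠ 0) :
    h2Sq (fun y => E / (1 - ν^2) * (s / (8 * π)) * (y.1 * log (y.1^2 + y.2^2) + y.1)) x =
      (s * (E / (1 - ν^2) / (16 * π)))^2 * h2SqOp pd1 qlogq x := by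
  have heq : (fun y : ℝ × ℝ => E / (1 - ν^2) * (s / (8 * π)) * (y.1 * log (y.1^2 + y.2^2) + y.1))
      =ᶠ[𝓝 x] fun y => s * (E / (1 - ν^2) / (16 * π)) * pd1 qlogq y :=
    eventually_of_mem (isOpen_compl_singleton.mem_nhds hx) fun y hy => by
      dsimp only
      rw [pd1_qlogq hy]
      field_simp
      ring
  rw [h2Sq_congr heq, h2Sq_const_mul, h2Sq_pd1 contDiffOn_qlogq isOpen_compl_singleton hx]

theorem setIntegral_h2Sq_vbarh {r R h : ℝ} (hh : h ∈ Ioo 0 r) :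
    1/h^2 * ∫ x in annulus r R, h2Sq (vbarh E ν s h) x =
      (s * (E / (1 - ν^2) / (16 * π)))^2 *
        ∫ x in annulus r R, h2SqOp (centralDiff h) qlogq x := by
  rw [← integral_const_mul, ← integral_const_mul]
  refine setIntegral_congr_fun (isOpen_annulus r R).measurableSet fun x hx => ?_
  have hh0 : h ≠ 0 := hh.1.ne'
  have hr : 0 < r := hh.1.trans hh.2
  have hp := add_mem_shell (t := h/2) hx (by rw [abs_of_pos (half_pos hh.1)]; linarith [hh.2])
  have hm := add_mem_shell (t := -(h/2)) hx
    (by rw [abs_neg, abs_of_pos (half_pos hh.1)]; linarith [hh.2])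
  rw [h2Sq_vbarh E ν s hh0 (shell_subset_compl_zero hr hp)
    (shell_subset_compl_zero hr (by simpa [sub_eq_add_neg] using hm))]
  field_simp

end Dipole

/-- On the annulus `A_{r,R}(0)`, the rescaled squared `H²`-norm of the dipole
Airy function converges, as `h → 0⁺` (with `h < r`), to the squared `H²`-norm of `v̄'`; and the
limit is of the form `C(r,R)·s²` with `C(r,R) > 0` depending only on `r, R, E, ν`. -/
theorem dipole_H2_annulus_limit (E ν : ℝ) (hE : 0 < E) (hν₁ : -1 < ν) (hν₂ : ν < 1/2)
    (r R : ℝ) (hr : 0 < r) (hrR : r < R) :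
    let vbar' : ℝ → ℝ × ℝ → ℝ := fun s x =>
      (E/(1-ν^2)) * (s/(8*π)) * (x.1 * Real.log (x.1^2 + x.2^2) + x.1)
    let I : ℝ → ℝ := fun s =>
      ∫ x in annulus r R, ((vbar' s x)^2 + gradSq (vbar' s) x + hessSq (vbar' s) x)
    (∀ s : ℝ,
      Tendsto (fun h : ℝ => (1/h^2) *
          ∫ x in annulus r R,
            ((vbarh E ν s h x)^2 + gradSq (vbarh E ν s h) x + hessSq (vbarh E ν s h) x))
        (nhdsWithin 0 (Set.Ioo 0 r)) (nhds (I s))) ∧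
    (∃ C : ℝ, 0 < C ∧ ∀ s : ℝ, I s = C * s^2) := by
  intro vbar' I
  have hA := (isOpen_annulus r R).measurableSet
  have hU := shell_subset_compl_zero (R := R) hr
  have hnear : ∀ x ∈ annulus r R, ∀ h ∈ Ioo 0 r, ∀ t ∈ Icc (-(h/2)) (h/2),
      x + (t, 0) ∈ shell r R := fun x hx h hh t ht =>
    add_mem_shell hx ((abs_le.2 ht).trans_lt (by linarith [hh.2]))
  have hI : ∀ s, I s = (s * (E / (1 - ν^2) / (16 * π)))^2 *
      ∫ x in annulus r R, h2SqOp pd1 qlogq x := fun s => by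
    rw [← integral_const_mul]
    exact setIntegral_congr_fun hA fun x hx =>
      h2Sq_dipoleLimit E ν s (hU (annulus_subset_shell hr hx))
  have hk : 0 < E / (1 - ν^2) / (16 * π) := by
    have : 0 < 1 - ν^2 := by nlinarith
    positivity
  refine ⟨fun s => ?_, _, mul_pos (pow_pos hk 2) (setIntegral_h2SqOp_pd1_qlogq_pos hr hrR),
    fun s => by rw [hI]; ring⟩
  rw [hI]
  refine ((tendsto_setIntegral_h2SqOp_centralDiff contDiffOn_qlogq continuous_qlogq.measurable
    isOpen_compl_singleton (isCompact_shell r R) hU hA hr hnear).const_mul _).congr' ?_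
  filter_upwards [eventually_mem_nhdsWithin] with h hh
  exact (setIntegral_h2Sq_vbarh E ν s hh).symm
end
end

section
/- Let R > 0. Then, as h → 0⁺ (with h < R), (1/log(R/h)) · ∫_{A_{h,R}(0)} x₂⁴·x₁² / ( ((x₁−h/2)² + x₂²) · ((x₁+h/2)² + x₂²) )² dx converges to π/8. -/
open Real MeasureTheory Filter

noncomputable section

/-!
The integrand `K_h = dipoleKernel h` is close to the profile `K_0(x) = x₂⁴x₁²/|x|⁸`: on `|x| > h` one has
`|K_h(x) - K_0(x)| ≤ C h²/|x|⁴`, and `∫_{A_{h,R}} |x|⁻⁴ ≤ π/h²`, so replacing `K_h` by `K_0` costs `O(1)`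
uniformly in `h`. The profile is homogeneous of degree `-2`, so in polar coordinates
`∫_{A_{h,R}} K_0 = log(R/h) · ∫_{-π}^{π} sin⁴θ cos²θ dθ = (π/8) log(R/h)`, and `log(R/h) → ∞`.
-/

open Set Topology

lemma mul_cos_sq_add_mul_sin_sq (r θ : ℝ) : (r * cos θ)^2 + (r * sin θ)^2 = r^2 := by
  linear_combination r^2 * sin_sq_add_cos_sq θ

lemma isOpen_annulus_s7 (a b : ℝ) : IsOpen (annulus a b) := by
  have hc : Continuous fun x : ℝ × ℝ => x.1^2 + x.2^2 := by fun_prop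
  exact (isOpen_lt continuous_const hc).inter (isOpen_lt hc continuous_const)

lemma polarCoord_symm_mem_annulus_iff {a b : ℝ} (ha : 0 ≤ a) (hb : 0 ≤ b) {p : ℝ × ℝ}
    (hp : p ∈ polarCoord.target) :
    polarCoord.symm p ∈ annulus a b ↔ p ∈ Ioo a b ×ˢ Ioo (-π) π := by
  obtain ⟨hr : 0 < p.1, hθ⟩ := hp
  simp only [annulus, polarCoord_symm_apply, mem_ofPred_eq, mul_cos_sq_add_mul_sin_sq, mem_prod, mem_Ioo, hθ,
    and_true]
  constructor
  · rintro ⟨h1, h2⟩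
    exact ⟨by nlinarith, by nlinarith⟩
  · rintro ⟨h1, h2⟩
    exact ⟨by nlinarith, by nlinarith⟩

theorem integral_annulus_eq_polar {a b : ℝ} (ha : 0 ≤ a) (hb : 0 ≤ b) (f : ℝ × ℝ → ℝ) :
    ∫ x in annulus a b, f x =
      ∫ p in Ioo a b ×ˢ Ioo (-π) π, p.1 * f (p.1 * cos p.2, p.1 * sin p.2) := by
  have htarget : polarCoord.target = Ioi 0 ×ˢ Ioo (-π) π := rfl
  have hsub : Ioo a b ×ˢ Ioo (-π) π ⊆ polarCoord.target := by
    rw [htarget]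
    exact prod_mono (fun r hr => ha.trans_lt hr.1) subset_rfl
  rw [← integral_indicator (isOpen_annulus_s7 a b).measurableSet,
    ← integral_comp_polarCoord_symm,
    ← inter_eq_right.2 hsub, ← setIntegral_indicator (measurableSet_Ioo.prod measurableSet_Ioo)]
  refine setIntegral_congr_fun polarCoord.open_target.measurableSet fun p hp => ?_
  by_cases hmem : p ∈ Ioo a b ×ˢ Ioo (-π) π
  · rw [indicator_of_mem ((polarCoord_symm_mem_annulus_iff ha hb hp).2 hmem), indicator_of_mem hmem]
    rfl
  · rw [indicator_of_notMem (mt (polarCoord_symm_mem_annulus_iff ha hb hp).1 hmem),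
      indicator_of_notMem hmem, smul_zero]

theorem integral_annulus_of_polar_eq_mul {a b : ℝ} (ha : 0 ≤ a) (hb : 0 ≤ b) {f : ℝ × ℝ → ℝ}
    {φ ψ : ℝ → ℝ} (hf : ∀ r θ, 0 < r → r * f (r * cos θ, r * sin θ) = φ r * ψ θ) :
    ∫ x in annulus a b, f x = (∫ r in Ioo a b, φ r) * ∫ θ in Ioo (-π) π, ψ θ := by
  rw [integral_annulus_eq_polar ha hb, ← integral_prod_mul, Measure.volume_eq_prod,
    Measure.prod_restrict]
  exact setIntegral_congr_fun (measurableSet_Ioo.prod measurableSet_Ioo)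
    fun p hp => hf p.1 p.2 (ha.trans_lt hp.1.1)

lemma integral_sin_pow_four_mul_cos_sq :
    ∫ θ in Ioo (-π) π, sin θ^4 * cos θ^2 = π/8 := by
  rw [← integral_Ioc_eq_integral_Ioo,
    ← intervalIntegral.integral_of_le (by linarith [pi_pos] : -π ≤ π)]
  -- an antiderivative, found by the reduction formulas for powers of `sin`
  have hderiv : ∀ θ ∈ uIcc (-π) π, HasDerivAt
      (fun t => t/16 + cos t * (-(sin t)/16 - (sin t)^3/24 + (sin t)^5/6))
      (sin θ^4 * cos θ^2) θ := by
    intro θ _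
    have hs := hasDerivAt_sin θ
    refine (((hasDerivAt_id θ).div_const 16).add ((hasDerivAt_cos θ).mul
      ((((hs.neg).div_const 16).sub ((hs.pow 3).div_const 24)).add
        ((hs.pow 5).div_const 6)))).congr_deriv ?_
    simp only [Pi.add_apply, Pi.sub_apply, Pi.neg_apply, Pi.pow_apply, Nat.reduceSub]
    linear_combination (-(1/16 + sin θ^2/8 + sin θ^4/6)) * sin_sq_add_cos_sq θ
  rw [intervalIntegral.integral_eq_sub_of_hasDerivAt hderiv
    (Continuous.intervalIntegrable (by fun_prop) _ _)]
  simp only [cos_neg, cos_pi, sin_neg, sin_pi]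
  ring

lemma integral_Ioo_zpow {a b : ℝ} (ha : 0 < a) (hab : a ≤ b) {n : ℤ} (hn : n ≠ -1) :
    ∫ r in Ioo a b, r ^ n = (b ^ (n + 1) - a ^ (n + 1)) / (n + 1) := by
  rw [← integral_Ioc_eq_integral_Ioo, ← intervalIntegral.integral_of_le hab]
  refine integral_zpow (Or.inr ⟨hn, fun h0 => ?_⟩)
  rw [uIcc_of_le hab] at h0
  exact ha.not_ge h0.1

lemma integral_Ioo_inv {a b : ℝ} (ha : 0 < a) (hab : a ≤ b) :
    ∫ r in Ioo a b, r⁻¹ = log (b / a) := by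
  rw [← integral_Ioc_eq_integral_Ioo, ← intervalIntegral.integral_of_le hab]
  exact integral_inv_of_pos ha (ha.trans_le hab)

lemma integral_annulus_inv_sq {a b : ℝ} (ha : 0 < a) (hab : a ≤ b) :
    ∫ x in annulus a b, ((x.1^2 + x.2^2)^2)⁻¹ = π * ((a^2)⁻¹ - (b^2)⁻¹) := by
  rw [integral_annulus_of_polar_eq_mul ha.le (ha.le.trans hab)
      (φ := fun r => r ^ (-3 : ℤ)) (ψ := fun _ => 1),
    integral_Ioo_zpow ha hab (by norm_num)]
  · simp only [setIntegral_const, Real.volume_real_Ioo, smul_eq_mul, mul_one]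
    rw [max_eq_left (by linarith [pi_pos])]
    norm_num [zpow_neg]
    ring
  · intro r θ hr
    rw [mul_cos_sq_add_mul_sin_sq, zpow_neg]
    field_simp

lemma isCompact_closedAnnulus (a b : ℝ) :
    IsCompact {x : ℝ × ℝ | a^2 ≤ x.1^2 + x.2^2 ∧ x.1^2 + x.2^2 ≤ b^2} := by
  have hc : Continuous fun x : ℝ × ℝ => x.1^2 + x.2^2 := by fun_prop
  have hI : IsCompact (Icc (-|b|) |b|) := isCompact_Icc
  refine (hI.prod hI).of_isClosed_subset
    ((isClosed_le continuous_const hc).inter (isClosed_le hc continuous_const)) ?_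
  rintro x ⟨-, hx⟩
  exact ⟨abs_le.mp (sq_le_sq.mp (by nlinarith [sq_nonneg x.2])),
    abs_le.mp (sq_le_sq.mp (by nlinarith [sq_nonneg x.1]))⟩

lemma integrableOn_annulus_of_continuousOn {a b : ℝ} {f : ℝ × ℝ → ℝ}
    (hf : ContinuousOn f {x | a^2 ≤ x.1^2 + x.2^2 ∧ x.1^2 + x.2^2 ≤ b^2}) :
    IntegrableOn f (annulus a b) :=
  (hf.integrableOn_compact (isCompact_closedAnnulus a b)).mono_set fun _ hx => ⟨hx.1.le, hx.2.le⟩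

lemma sq_sub_add_sq_pos {x : ℝ × ℝ} {c : ℝ} (hc : c^2 < x.1^2 + x.2^2) :
    0 < (x.1 - c)^2 + x.2^2 := by
  by_contra! hle
  have h1 : x.1 = c := by nlinarith [sq_nonneg (x.1 - c), sq_nonneg x.2]
  have h2 : x.2 = 0 := by nlinarith [sq_nonneg (x.1 - c), sq_nonneg x.2]
  rw [h1, h2] at hc
  linarith

def dipoleKernel (h : ℝ) (x : ℝ × ℝ) : ℝ :=
  x.2^4 * x.1^2 / (((x.1 - h/2)^2 + x.2^2) * ((x.1 + h/2)^2 + x.2^2))^2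

lemma continuousOn_dipoleKernel (h : ℝ) :
    ContinuousOn (dipoleKernel h) {x | h^2 < 4 * (x.1^2 + x.2^2)} := by
  refine ContinuousOn.div (by fun_prop) (by fun_prop) fun x hx => ?_
  have hx' : (h/2)^2 < x.1^2 + x.2^2 := by simp only [mem_ofPred_eq] at hx; linarith
  have h1 := sq_sub_add_sq_pos hx'
  have h2 := sq_sub_add_sq_pos (c := -(h/2)) (by rwa [neg_sq])
  rw [sub_neg_eq_add] at h2
  positivity

lemma integrableOn_dipoleKernel {h a b : ℝ} (hha : h^2 < 4 * a^2) :
    IntegrableOn (dipoleKernel h) (annulus a b) :=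
  integrableOn_annulus_of_continuousOn
    ((continuousOn_dipoleKernel h).mono fun _ hx => by simp only [mem_ofPred_eq]; linarith [hx.1])

lemma integrableOn_inv_sq_annulus {a b : ℝ} (ha : 0 < a) :
    IntegrableOn (fun x : ℝ × ℝ => ((x.1^2 + x.2^2)^2)⁻¹) (annulus a b) := by
  refine integrableOn_annulus_of_continuousOn (ContinuousOn.inv₀ (by fun_prop) fun x hx => ?_)
  have : 0 < x.1^2 + x.2^2 := (pow_pos ha 2).trans_le hx.1
  positivity

lemma integral_annulus_dipoleKernel_zero {a b : ℝ} (ha : 0 < a) (hab : a ≤ b) :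
    ∫ x in annulus a b, dipoleKernel 0 x = log (b / a) * (π / 8) := by
  rw [integral_annulus_of_polar_eq_mul ha.le (ha.le.trans hab)
      (φ := fun r => r⁻¹) (ψ := fun θ => sin θ^4 * cos θ^2),
    integral_Ioo_inv ha hab, integral_sin_pow_four_mul_cos_sq]
  intro r θ hr
  simp only [dipoleKernel, zero_div, sub_zero, add_zero, mul_cos_sq_add_mul_sin_sq]
  field_simp

lemma abs_div_sq_sub_div_sq_le {N A D ε : ℝ} (hA : 0 < A) (hN : 0 ≤ N) (hNA : N ≤ A^3)
    (hD : A^2 / 16 ≤ D) (hD' : D ≤ 2 * A^2) (hAD : |A^2 - D| ≤ ε * A) :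
    |N / D^2 - N / (A^2)^2| ≤ 768 * ε * (A^2)⁻¹ := by
  have hDpos : 0 < D := lt_of_lt_of_le (by positivity) hD
  have hε : 0 ≤ ε := nonneg_of_mul_nonneg_left ((abs_nonneg _).trans hAD) hA
  have hdiff : N / D^2 - N / (A^2)^2 = N * ((A^2 - D) * (A^2 + D)) / (D^2 * A^4) := by
    field_simp
    ring
  have hnum : |N * ((A^2 - D) * (A^2 + D))| ≤ A^3 * (ε * A * (3 * A^2)) := by
    rw [abs_mul, abs_mul, abs_of_nonneg hN, abs_of_pos (by positivity : 0 < A^2 + D)]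
    gcongr
    linarith
  have hden : A^8 / 256 ≤ D^2 * A^4 := by
    have hD2 : (A^2 / 16)^2 ≤ D^2 := pow_le_pow_left₀ (by positivity) hD 2
    nlinarith [pow_pos hA 4]
  calc |N / D^2 - N / (A^2)^2|
      ≤ A^3 * (ε * A * (3 * A^2)) / (A^8 / 256) := by
        rw [hdiff, abs_div, abs_of_pos (by positivity : 0 < D^2 * A^4)]
        exact div_le_div₀ (by positivity) hnum (by positivity) hden
    _ = 768 * ε * (A^2)⁻¹ := by
        field_simp
        ring

lemma abs_dipoleKernel_sub_le {h : ℝ} {x : ℝ × ℝ} (hx : h^2 < x.1^2 + x.2^2) :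
    |dipoleKernel h x - dipoleKernel 0 x| ≤ 768 * h^2 * ((x.1^2 + x.2^2)^2)⁻¹ := by
  obtain ⟨x₁, x₂⟩ := x
  simp only [dipoleKernel, zero_div, sub_zero, add_zero, ← sq] at hx ⊢
  have hA : 0 < x₁^2 + x₂^2 := (sq_nonneg h).trans_lt hx
  -- the two factors of the denominator are `A + h²/4 ∓ h x₁`, with `A = x₁² + x₂²`
  refine abs_div_sq_sub_div_sq_le hA (by positivity) ?_ ?_ ?_ ?_
  · nlinarith [sq_nonneg (x₁^3), sq_nonneg (x₁^2 * x₂), sq_nonneg (x₁ * x₂^2), sq_nonneg (x₂^3)]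
  · have hd1 : (x₁^2 + x₂^2) / 4 ≤ (x₁ - h/2)^2 + x₂^2 := by
      nlinarith [sq_nonneg (x₁ - h), sq_nonneg x₂]
    have hd2 : (x₁^2 + x₂^2) / 4 ≤ (x₁ + h/2)^2 + x₂^2 := by
      nlinarith [sq_nonneg (x₁ + h), sq_nonneg x₂]
    nlinarith [mul_le_mul hd1 hd2 (by positivity) (le_trans (by positivity) hd1)]
  · nlinarith [mul_nonneg (sub_nonneg.2 hx.le) hA.le, mul_nonneg (sub_nonneg.2 hx.le) (sq_nonneg h),
      mul_nonneg (sq_nonneg h) (sq_nonneg x₁)]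
  · rw [abs_le]
    constructor
    · nlinarith [mul_le_mul_of_nonneg_left hx.le (sq_nonneg h),
        mul_nonneg (sq_nonneg h) (sq_nonneg x₁)]
    · nlinarith [mul_nonneg (sq_nonneg h) (sq_nonneg x₂)]

lemma abs_integral_dipoleKernel_sub_le {h R : ℝ} (hh : 0 < h) (hhR : h ≤ R) :
    |(∫ x in annulus h R, dipoleKernel h x) - log (R / h) * (π / 8)| ≤ 768 * π := by
  rw [← integral_annulus_dipoleKernel_zero hh hhR, ← integral_sub
    (integrableOn_dipoleKernel (by nlinarith)) (integrableOn_dipoleKernel (by nlinarith))]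
  calc ‖∫ x in annulus h R, (dipoleKernel h x - dipoleKernel 0 x)‖
      ≤ ∫ x in annulus h R, 768 * h^2 * ((x.1^2 + x.2^2)^2)⁻¹ :=
        norm_integral_le_of_norm_le ((integrableOn_inv_sq_annulus hh).const_mul _)
          ((ae_restrict_iff' (isOpen_annulus_s7 h R).measurableSet).2
            (Eventually.of_forall fun _ hx => abs_dipoleKernel_sub_le hx.1))
    _ = 768 * π * (1 - (h / R)^2) := by
        rw [integral_const_mul, integral_annulus_inv_sq hh hhR]
        field_simp
    _ ≤ 768 * π := by
        have : 0 ≤ (h / R)^2 := sq_nonneg _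
        nlinarith [pi_pos]

lemma tendsto_one_div_mul_of_abs_sub_mul_le {α : Type*} {l : Filter α} {L I : α → ℝ}
    {c C : ℝ} (hL : Tendsto L l atTop) (hI : ∀ᶠ t in l, |I t - L t * c| ≤ C) :
    Tendsto (fun t => 1 / L t * I t) l (𝓝 c) := by
  have hpos : ∀ᶠ t in l, 0 < L t := hL.eventually_gt_atTop 0
  have herr : Tendsto (fun t => (I t - L t * c) / L t) l (𝓝 0) := by
    refine squeeze_zero_norm' ?_ ((tendsto_const_nhds (x := C)).div_atTop hL)
    filter_upwards [hI, hpos] with t ht hLt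
    rw [Real.norm_eq_abs, abs_div, abs_of_pos hLt]
    exact div_le_div_of_nonneg_right ht hLt.le
  refine (zero_add c ▸ herr.add_const c).congr' ?_
  filter_upwards [hpos] with t hLt
  field_simp
  ring

lemma tendsto_log_const_div_nhdsGT_zero {R : ℝ} (hR : 0 < R) :
    Tendsto (fun h => log (R / h)) (𝓝[>] 0) atTop := by
  simpa only [Function.comp_def, div_eq_mul_inv] using
    tendsto_log_atTop.comp (tendsto_inv_nhdsGT_zero.const_mul_atTop hR)

/-- `(1/log(R/h)) ∫_{A_{h,R}(0)} x₂⁴x₁²/(((x₁−h/2)²+x₂²)((x₁+h/2)²+x₂²))² dx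
→ π/8` as `h → 0⁺`. -/
theorem annulus_F2_integral_limit (R : ℝ) (hR : 0 < R) :
    Tendsto (fun h : ℝ => (1/Real.log (R/h)) *
        ∫ x in annulus h R,
          x.2^4 * x.1^2 / (((x.1 - h/2)^2 + x.2^2) * ((x.1 + h/2)^2 + x.2^2))^2)
      (nhdsWithin 0 (Set.Ioo 0 R)) (nhds (π/8)) := by
  refine tendsto_one_div_mul_of_abs_sub_mul_le (C := 768 * π)
    ((tendsto_log_const_div_nhdsGT_zero hR).mono_left (nhdsWithin_mono _ Ioo_subset_Ioi_self)) ?_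
  filter_upwards [self_mem_nhdsWithin] with h ⟨hh, hhR⟩
  exact abs_integral_dipoleKernel_sub_le hh hhR.le
end
end

section
/- Let s ∈ ℝ and R > 0. Then the contribution of the core vanishes in the dipole energy scaling: as h → 0⁺ (with h < R), 𝒢(v̄_h; B_h(0) \ {(h/2,0), (−h/2,0)}) / (h² · log(R/h)) converges to 0. -/
open Real MeasureTheory Filter

noncomputable section

open Pointwise

/-!
Up to a quadratic polynomial, `v̄` is homogeneous of degree two:
`v̄(h z) = h² v̄(z) + c h² log(h²) |z|²`. In the dipole the two quadratic corrections cancel up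
to a linear function, so `v̄_h(h y) = h² v̄_1(y) + (linear in y)` and the Hessian of `v̄_h` at `x`
is the Hessian of `v̄_1` at `x / h`. The substitution `x = h y` (which holds for the Bochner
integral without any integrability assumption) then gives
`𝒢(v̄_h; B_h \ {±(h/2, 0)}) = h² 𝒢(v̄_1; B_1 \ {±(1/2, 0)})`, so the quotient is a constant
divided by `log(R/h) → ∞`.
-/

section Rescaling

variable {F : Type*} [NormedAddCommGroup F] [NormedSpace ℝ F]
  {f g : F → ℝ} {a c d h : ℝ} {L : F →L[ℝ] ℝ}

theorem hasFDerivAt_mul_comp_smul_add {z : F} (hg : DifferentiableAt ℝ g (c • z)) :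
    HasFDerivAt (fun y => a * g (c • y) + L y + d) ((a * c) • fderiv ℝ g (c • z) + L) z := by
  have hcomp : HasFDerivAt (fun y => g (c • y)) (c • fderiv ℝ g (c • z)) z := by
    have := hg.hasFDerivAt.comp z ((hasFDerivAt_id z).const_smul c)
    simp only [ContinuousLinearMap.comp_smul, ContinuousLinearMap.comp_id] at this
    exact this
  simpa [mul_smul] using ((hcomp.const_mul a).add L.hasFDerivAt).add_const d

theorem fderiv_fderiv_apply_mul_comp_smul_add {x : F} (hg : ContDiffAt ℝ 2 g (c • x)) (v w : F) :
    fderiv ℝ (fun y => fderiv ℝ (fun y => a * g (c • y) + L y + d) y w) x v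
      = a * c ^ 2 * fderiv ℝ (fun y => fderiv ℝ g y w) (c • x) v := by
  have hg_near : ∀ᶠ y in nhds x, DifferentiableAt ℝ g (c • y) :=
    (continuous_const_smul c).continuousAt.eventually
      (hg.eventually (by simp) |>.mono fun _ hp => hp.differentiableAt (by norm_num))
  have hfirst : (fun y => fderiv ℝ (fun y => a * g (c • y) + L y + d) y w)
      =ᶠ[nhds x] fun y => (a * c) * fderiv ℝ g (c • y) w + (0 : F →L[ℝ] ℝ) y + L w := by
    filter_upwards [hg_near] with y hy
    simp [(hasFDerivAt_mul_comp_smul_add (a := a) (d := d) (L := L) hy).fderiv]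
  have hdiff : DifferentiableAt ℝ (fun y => fderiv ℝ g y w) (c • x) :=
    ((hg.fderiv_right le_rfl).differentiableAt one_ne_zero).clm_apply
      (differentiableAt_const w)
  rw [hfirst.fderiv_eq, (hasFDerivAt_mul_comp_smul_add hdiff).fderiv]
  simp only [add_zero, smul_apply, smul_eq_mul]
  ring

theorem eq_mul_comp_inv_smul_add (hh : h ≠ 0) (hf : ∀ y, f (h • y) = h ^ 2 * g y + L y + d) :
    f = fun x => h ^ 2 * g (h⁻¹ • x) + (h⁻¹ • L) x + d := by
  funext x
  simpa [smul_inv_smul₀ hh] using hf (h⁻¹ • x)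

theorem fderiv_fderiv_apply_of_rescale (hh : h ≠ 0)
    (hf : ∀ y, f (h • y) = h ^ 2 * g y + L y + d) {x : F}
    (hg : ContDiffAt ℝ 2 g (h⁻¹ • x)) (v w : F) :
    fderiv ℝ (fun y => fderiv ℝ f y w) x v = fderiv ℝ (fun y => fderiv ℝ g y w) (h⁻¹ • x) v := by
  rw [eq_mul_comp_inv_smul_add hh hf, fderiv_fderiv_apply_mul_comp_smul_add hg,
    inv_pow, mul_inv_cancel₀ (pow_ne_zero 2 hh), one_mul]

end Rescaling

section Plane

variable {f g : ℝ × ℝ → ℝ} {h d : ℝ} {L : ℝ × ℝ →L[ℝ] ℝ}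

theorem hessSq_of_rescale (hh : h ≠ 0) (hf : ∀ y, f (h • y) = h ^ 2 * g y + L y + d)
    {x : ℝ × ℝ} (hg : ContDiffAt ℝ 2 g (h⁻¹ • x)) : hessSq f x = hessSq g (h⁻¹ • x) := by
  unfold hessSq pd1 pd2
  simp only [fderiv_fderiv_apply_of_rescale hh hf hg]

theorem lap_of_rescale (hh : h ≠ 0) (hf : ∀ y, f (h • y) = h ^ 2 * g y + L y + d)
    {x : ℝ × ℝ} (hg : ContDiffAt ℝ 2 g (h⁻¹ • x)) : lap f x = lap g (h⁻¹ • x) := by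
  unfold lap pd1 pd2
  simp only [fderiv_fderiv_apply_of_rescale hh hf hg]

theorem energy_of_rescale (E ν : ℝ) (hh : 0 < h) (hf : ∀ y, f (h • y) = h ^ 2 * g y + L y + d)
    {D : Set (ℝ × ℝ)} (hD : MeasurableSet D) (hg : ∀ y ∈ D, ContDiffAt ℝ 2 g y) :
    energy E ν f (h • D) = h ^ 2 * energy E ν g D := by
  set G := fun y => hessSq g y - ν * lap g y ^ 2
  have hcongr :
      Set.EqOn (fun x => hessSq f x - ν * lap f x ^ 2) (fun x => G (h⁻¹ • x)) (h • D) := by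
    rintro _ ⟨y, hy, rfl⟩
    have hgy : ContDiffAt ℝ 2 g (h⁻¹ • h • y) := by
      rw [inv_smul_smul₀ hh.ne']
      exact hg y hy
    simp only [G, hessSq_of_rescale hh.ne' hf hgy, lap_of_rescale hh.ne' hf hgy]
  have hint : ∫ x in h • D, G (h⁻¹ • x) = h ^ 2 * ∫ y in D, G y := by
    rw [Measure.setIntegral_comp_smul_of_pos _ _ _ (inv_pos.mpr hh), inv_smul_smul₀ hh.ne',
      Module.finrank_prod, Module.finrank_self, inv_pow, inv_inv, smul_eq_mul]
  rw [energy, energy, setIntegral_congr_fun (hD.const_smul₀ h) hcongr, hint]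
  ring

end Plane

theorem sum_sq_pos_of_ne_zero {p : ℝ × ℝ} (hp : p ≠ 0) : 0 < p.1 ^ 2 + p.2 ^ 2 := by
  rcases eq_or_ne p.1 0 with h1 | h1
  · have h2 : p.2 ≠ 0 := fun h2 => hp (Prod.ext h1 h2)
    positivity
  · positivity

theorem smul_ball2 {h : ℝ} (hh : 0 < h) (ξ : ℝ × ℝ) (r : ℝ) :
    h • ball2 ξ r = ball2 (h • ξ) (h * r) := by
  ext x
  rw [Set.mem_smul_set_iff_inv_smul_mem₀ hh.ne']
  simp only [ball2, Set.mem_ofPred_eq, Prod.smul_fst, Prod.smul_snd, smul_eq_mul]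
  rw [← mul_lt_mul_iff_right₀ (by positivity : (0 : ℝ) < h ^ 2)]
  field_simp

section Dipole

variable (E ν s : ℝ)

theorem vbar_contDiffAt {n : WithTop ℕ∞} {p : ℝ × ℝ} (hp : p ≠ 0) :
    ContDiffAt ℝ n (vbar E ν) p := by
  have hsq : ContDiffAt ℝ n (fun x : ℝ × ℝ => x.1 ^ 2 + x.2 ^ 2) p := by fun_prop
  have hlog : ContDiffAt ℝ n log (p.1 ^ 2 + p.2 ^ 2) :=
    contDiffAt_log.mpr (sum_sq_pos_of_ne_zero hp).ne'
  have hformula : ContDiffAt ℝ n (fun x : ℝ × ℝ =>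
      E / (1 - ν ^ 2) * ((x.1 ^ 2 + x.2 ^ 2) / (16 * π)) * log (x.1 ^ 2 + x.2 ^ 2)) p :=
    (contDiffAt_const.mul (hsq.div_const _)).mul (hlog.comp (g := log) p hsq)
  refine hformula.congr_of_eventuallyEq ?_
  filter_upwards [eventually_ne_nhds hp] with x hx
  simp [vbar, hx]

theorem vbarh_contDiffAt {n : WithTop ℕ∞} {h : ℝ} {x : ℝ × ℝ}
    (h₁ : x ≠ (h / 2, 0)) (h₂ : x ≠ (-(h / 2), 0)) : ContDiffAt ℝ n (vbarh E ν s h) x := by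
  have hsub : x - (h / 2, 0) ≠ 0 := sub_ne_zero.mpr h₁
  have hadd : x + (h / 2, 0) ≠ 0 := by
    rwa [← sub_neg_eq_add, sub_ne_zero, Prod.neg_mk, neg_zero]
  exact contDiffAt_const.mul
    (((vbar_contDiffAt E ν hsub).comp x (contDiffAt_id.sub contDiffAt_const)).sub
      ((vbar_contDiffAt E ν hadd).comp x (contDiffAt_id.add contDiffAt_const)))

theorem vbar_smul {h : ℝ} (hh : h ≠ 0) (z : ℝ × ℝ) :
    vbar E ν (h • z) = h ^ 2 * vbar E ν z
      + E / (1 - ν ^ 2) * h ^ 2 * log (h ^ 2) * (z.1 ^ 2 + z.2 ^ 2) / (16 * π) := by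
  rcases eq_or_ne z 0 with rfl | hz
  · simp [vbar]
  have hsq : (h * z.1) ^ 2 + (h * z.2) ^ 2 = h ^ 2 * (z.1 ^ 2 + z.2 ^ 2) := by ring
  rw [vbar, vbar, if_neg (smul_ne_zero hh hz), if_neg hz, Prod.smul_fst, Prod.smul_snd,
    smul_eq_mul, smul_eq_mul, hsq, log_mul (by positivity) (sum_sq_pos_of_ne_zero hz).ne']
  ring

theorem vbarh_smul {h : ℝ} (hh : h ≠ 0) (y : ℝ × ℝ) :
    vbarh E ν s h (h • y) = h ^ 2 * vbarh E ν s 1 y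
      + s * (E / (1 - ν ^ 2)) * h ^ 2 * log (h ^ 2) / (8 * π) * y.1 := by
  have hsub : h • y - (h / 2, 0) = h • (y - (1 / 2, 0)) := by
    simp [smul_sub, Prod.smul_mk, div_eq_mul_inv]
  have hadd : h • y + (h / 2, 0) = h • (y + (1 / 2, 0)) := by
    simp [smul_add, Prod.smul_mk, div_eq_mul_inv]
  rw [vbarh, vbarh, hsub, hadd, vbar_smul E ν hh, vbar_smul E ν hh]
  simp only [Prod.fst_sub, Prod.snd_sub, Prod.fst_add, Prod.snd_add]
  field_simp
  ring

def dipoleCore (h : ℝ) : Set (ℝ × ℝ) := ball2 0 h \ {(h / 2, 0), (-(h / 2), 0)}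

theorem dipoleCore_eq_smul {h : ℝ} (hh : 0 < h) : dipoleCore h = h • dipoleCore 1 := by
  rw [dipoleCore, dipoleCore, Set.smul_set_sdiff₀ hh.ne', smul_ball2 hh, Set.smul_set_insert,
    Set.smul_set_singleton]
  simp [Prod.smul_mk, div_eq_mul_inv]

theorem measurableSet_dipoleCore (h : ℝ) : MeasurableSet (dipoleCore h) :=
  (measurableSet_lt (by fun_prop) measurable_const).diff (Set.toFinite _).measurableSet

theorem energy_vbarh_dipoleCore {h : ℝ} (hh : 0 < h) :
    energy E ν (vbarh E ν s h) (dipoleCore h)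
      = h ^ 2 * energy E ν (vbarh E ν s 1) (dipoleCore 1) := by
  have hscale (y : ℝ × ℝ) : vbarh E ν s h (h • y) = h ^ 2 * vbarh E ν s 1 y
      + ((s * (E / (1 - ν ^ 2)) * h ^ 2 * log (h ^ 2) / (8 * π)) • ContinuousLinearMap.fst ℝ ℝ ℝ) y
      + 0 := by
    simp [vbarh_smul E ν s hh.ne']
  rw [dipoleCore_eq_smul hh]
  refine energy_of_rescale E ν hh hscale (measurableSet_dipoleCore 1)
    fun y hy => vbarh_contDiffAt E ν s ?_ ?_
  · exact fun hy₁ => hy.2 (Or.inl (by simpa using hy₁))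
  · exact fun hy₂ => hy.2 (Or.inr (by simpa using hy₂))

end Dipole

theorem tendsto_log_div_nhdsGT_zero {R : ℝ} (hR : 0 < R) :
    Tendsto (fun h => log (R / h)) (nhdsWithin 0 (Set.Ioi 0)) atTop :=
  tendsto_log_atTop.comp <|
    (tendsto_inv_nhdsGT_zero.const_mul_atTop hR).congr fun h => (div_eq_mul_inv R h).symm

theorem dipole_core_energy_vanishes_general (E ν : ℝ)
    (s R : ℝ) (hR : 0 < R) :
    Tendsto (fun h : ℝ =>
        energy E ν (vbarh E ν s h)
            (ball2 0 h \ {((h/2, 0) : ℝ × ℝ), ((-(h/2), 0) : ℝ × ℝ)}) /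
          (h^2 * Real.log (R/h)))
      (nhdsWithin 0 (Set.Ioo 0 R)) (nhds 0) := by
  have hlog := (tendsto_log_div_nhdsGT_zero hR).mono_left
    (nhdsWithin_mono 0 (Set.Ioo_subset_Ioi_self : Set.Ioo (0 : ℝ) R ⊆ Set.Ioi 0))
  refine ((tendsto_const_nhds (x := energy E ν (vbarh E ν s 1) (dipoleCore 1))).div_atTop
    hlog).congr' ?_
  filter_upwards [self_mem_nhdsWithin] with h hh
  rw [← dipoleCore, energy_vbarh_dipoleCore E ν s hh.1,
    mul_div_mul_left _ _ (pow_ne_zero 2 hh.1.ne')]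

/-- The core contribution vanishes in the dipole energy scaling:
`𝒢(v̄_h; B_h(0) \ {(h/2,0), (−h/2,0)}) / (h² log(R/h)) → 0` as `h → 0⁺`. -/
theorem dipole_core_energy_vanishes (E ν : ℝ) (hE : 0 < E) (hν₁ : -1 < ν) (hν₂ : ν < 1/2)
    (s R : ℝ) (hR : 0 < R) :
    Tendsto (fun h : ℝ =>
        energy E ν (vbarh E ν s h)
            (ball2 0 h \ {((h/2, 0) : ℝ × ℝ), ((-(h/2), 0) : ℝ × ℝ)}) /
          (h^2 * Real.log (R/h)))
      (nhdsWithin 0 (Set.Ioo 0 R)) (nhds 0) :=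
  dipole_core_energy_vanishes_general E ν s R hR
end
end

section
/- Let E > 0, ν ∈ (−1, 1/2), s ∈ ℝ, 0 < ε < R, and let f(x) := (s/(16π))·(E/(1−ν²))·(α_ε + β_ε/|x|² + γ_ε·|x|² + 2·log(|x|²))·x₁ on ℝ² \ {0}, with α_ε := 2(R²−ε²)/(R²+ε²) − 2·log(R²), β_ε := 2ε²R²/(R²+ε²), γ_ε := −2/(R²+ε²). Then: (i) for every x with |x| = R one has f(x) = 0 and ∇f(x) = 0 (clamped outer boundary); (ii) for every x with |x| = ε the Hessian of f applied to the tangent vector vanishes, i.e. ∇²f(x)·(−x₂, x₁) = (0,0) (traction-free inner boundary). -/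
open Real MeasureTheory Filter

noncomputable section

/-!
Write `f(x) = h(|x|²) x₁` with `h(t) = c (α + β/t + γ t + 2 log t)`. Then
`∇f = (h + 2x₁²h', 2x₁x₂h')`, and the `h''` terms cancel from the Hessian applied to the tangent
`(−x₂, x₁)`, which equals `(−4x₁x₂h', 2(x₁² − x₂²)h')`. So the boundary conditions reduce to
`h(R²) = h'(R²) = 0` and `h'(ε²) = 0`, three linear conditions which `α, β, γ` are chosen to solve.
-/

open ContinuousLinearMap Topology

def radialMulFst (h : ℝ → ℝ) (x : ℝ × ℝ) : ℝ := h (x.1^2 + x.2^2) * x.1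

section RadialMulFst

variable {φ h h' : ℝ → ℝ} {d : ℝ} {x : ℝ × ℝ}

theorem hasFDerivAt_comp_normSq (hφ : HasDerivAt φ d (x.1^2 + x.2^2)) :
    HasFDerivAt (fun y : ℝ × ℝ => φ (y.1^2 + y.2^2))
      ((2*d*x.1) • fst ℝ ℝ ℝ + (2*d*x.2) • snd ℝ ℝ ℝ) x := by
  have hsq := (hasFDerivAt_fst (𝕜 := ℝ) (p := x) |>.pow 2).add
    (hasFDerivAt_snd (𝕜 := ℝ) (p := x) |>.pow 2)
  refine (hφ.comp_hasFDerivAt x hsq).congr_fderiv ?_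
  ext <;> simp <;> ring

theorem hasFDerivAt_radialMulFst (hh : HasDerivAt h d (x.1^2 + x.2^2)) :
    HasFDerivAt (radialMulFst h)
      ((h (x.1^2 + x.2^2) + 2*x.1^2*d) • fst ℝ ℝ ℝ + (2*x.1*x.2*d) • snd ℝ ℝ ℝ) x := by
  refine ((hasFDerivAt_comp_normSq hh).mul
    (hasFDerivAt_fst (𝕜 := ℝ) (p := x))).congr_fderiv ?_
  ext <;> simp <;> ring

theorem pd1_radialMulFst (hh : HasDerivAt h d (x.1^2 + x.2^2)) :
    pd1 (radialMulFst h) x = h (x.1^2 + x.2^2) + 2*x.1^2*d := by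
  simp [pd1, (hasFDerivAt_radialMulFst hh).fderiv]

theorem pd2_radialMulFst (hh : HasDerivAt h d (x.1^2 + x.2^2)) :
    pd2 (radialMulFst h) x = 2*x.1*x.2*d := by
  simp [pd2, (hasFDerivAt_radialMulFst hh).fderiv]

theorem eventually_comp_normSq {p : ℝ → Prop} (hp : ∀ᶠ t in 𝓝 (x.1^2 + x.2^2), p t) :
    ∀ᶠ y : ℝ × ℝ in 𝓝 x, p (y.1^2 + y.2^2) :=
  ((continuous_fst.pow 2).add (continuous_snd.pow 2)).continuousAt.eventually hp

theorem hasFDerivAt_pd1_radialMulFst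
    (hh : ∀ᶠ t in 𝓝 (x.1^2 + x.2^2), HasDerivAt h (h' t) t)
    (hh' : HasDerivAt h' d (x.1^2 + x.2^2)) :
    HasFDerivAt (pd1 (radialMulFst h))
      ((6*x.1*h' (x.1^2 + x.2^2) + 4*x.1^3*d) • fst ℝ ℝ ℝ
        + (2*x.2*h' (x.1^2 + x.2^2) + 4*x.1^2*x.2*d) • snd ℝ ℝ ℝ) x := by
  have hu := (hasFDerivAt_comp_normSq hh.self_of_nhds).add
    ((hasFDerivAt_fst (𝕜 := ℝ) (p := x) |>.pow 2).const_mul 2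
      |>.mul (hasFDerivAt_comp_normSq hh'))
  refine (hu.congr_fderiv ?_).congr_of_eventuallyEq
    ((eventually_comp_normSq hh).mono fun y hy => pd1_radialMulFst hy)
  ext <;> simp <;> ring

theorem hasFDerivAt_pd2_radialMulFst
    (hh : ∀ᶠ t in 𝓝 (x.1^2 + x.2^2), HasDerivAt h (h' t) t)
    (hh' : HasDerivAt h' d (x.1^2 + x.2^2)) :
    HasFDerivAt (pd2 (radialMulFst h))
      ((2*x.2*h' (x.1^2 + x.2^2) + 4*x.1^2*x.2*d) • fst ℝ ℝ ℝ
        + (2*x.1*h' (x.1^2 + x.2^2) + 4*x.1*x.2^2*d) • snd ℝ ℝ ℝ) x := by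
  have hv := ((hasFDerivAt_fst (𝕜 := ℝ) (p := x)).const_mul 2
    |>.mul (hasFDerivAt_snd (𝕜 := ℝ) (p := x))).mul (hasFDerivAt_comp_normSq hh')
  refine (hv.congr_fderiv ?_).congr_of_eventuallyEq
    ((eventually_comp_normSq hh).mono fun y hy => pd2_radialMulFst hy)
  ext <;> simp <;> ring

theorem hessian_radialMulFst_apply_tangent
    (hh : ∀ᶠ t in 𝓝 (x.1^2 + x.2^2), HasDerivAt h (h' t) t)
    (hh' : HasDerivAt h' d (x.1^2 + x.2^2)) :
    pd1 (pd1 (radialMulFst h)) x * (-x.2) + pd1 (pd2 (radialMulFst h)) x * x.1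
        = -4*x.1*x.2*h' (x.1^2 + x.2^2) ∧
      pd2 (pd1 (radialMulFst h)) x * (-x.2) + pd2 (pd2 (radialMulFst h)) x * x.1
        = 2*(x.1^2 - x.2^2)*h' (x.1^2 + x.2^2) := by
  simp only [pd1, pd2, (hasFDerivAt_pd1_radialMulFst hh hh').fderiv,
    (hasFDerivAt_pd2_radialMulFst hh hh').fderiv]
  constructor <;> simp <;> ring

end RadialMulFst

theorem hasDerivAt_edgeProfile (α β γ : ℝ) {t : ℝ} (ht : t ≠ 0) :
    HasDerivAt (fun t => α + β/t + γ*t + 2*log t) (-β/t^2 + γ + 2/t) t := by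
  have := (((hasDerivAt_const t α).add
    ((hasDerivAt_const t β).fun_div (hasDerivAt_id' t) ht)).add
      ((hasDerivAt_id' t).const_mul γ)).add ((hasDerivAt_log ht).const_mul 2)
  exact this.congr_deriv (by field_simp; ring)

theorem hasDerivAt_edgeProfile_deriv (β γ : ℝ) {t : ℝ} (ht : t ≠ 0) :
    HasDerivAt (fun t => -β/t^2 + γ + 2/t) (2*β/t^3 - 2/t^2) t := by
  have := (((hasDerivAt_const t (-β)).fun_div (hasDerivAt_pow 2 t) (pow_ne_zero 2 ht)).add
    (hasDerivAt_const t γ)).add ((hasDerivAt_const t 2).fun_div (hasDerivAt_id' t) ht)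
  exact this.congr_deriv (by field_simp; ring)

theorem edge_dislocation_boundary_conditions_general (E ν s ε R : ℝ)
    (hε : 0 < ε) (hεR : ε < R) :
    let αe : ℝ := 2*(R^2 - ε^2)/(R^2 + ε^2) - 2*Real.log (R^2)
    let βe : ℝ := 2*ε^2*R^2/(R^2 + ε^2)
    let γe : ℝ := -2/(R^2 + ε^2)
    let f : ℝ × ℝ → ℝ := fun x =>
      (s/(16*π)) * (E/(1-ν^2)) *
        (αe + βe/(x.1^2 + x.2^2) + γe*(x.1^2 + x.2^2) + 2*Real.log (x.1^2 + x.2^2)) * x.1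
    -- (i) clamped outer boundary
    (∀ x : ℝ × ℝ, x.1^2 + x.2^2 = R^2 → f x = 0 ∧ fderiv ℝ f x = 0) ∧
    -- (ii) traction-free inner boundary: `∇²f(x)·(−x₂, x₁) = (0,0)`
    (∀ x : ℝ × ℝ, x.1^2 + x.2^2 = ε^2 →
      pd1 (pd1 f) x * (-x.2) + pd1 (pd2 f) x * x.1 = 0 ∧
      pd2 (pd1 f) x * (-x.2) + pd2 (pd2 f) x * x.1 = 0) := by
  intro αe βe γe f
  set c := (s/(16*π)) * (E/(1-ν^2))
  set h : ℝ → ℝ := fun t => c * (αe + βe/t + γe*t + 2*log t)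
  set h' : ℝ → ℝ := fun t => c * (-βe/t^2 + γe + 2/t)
  have hf : f = radialMulFst h := rfl
  have hR : R ≠ 0 := (hε.trans hεR).ne'
  have hderiv {t : ℝ} (ht : t ≠ 0) : HasDerivAt h (h' t) t :=
    (hasDerivAt_edgeProfile αe βe γe ht).const_mul c
  have hR_val : h (R^2) = 0 := by
    simp only [h, αe, βe, γe]; field_simp; ring
  have hR_deriv : h' (R^2) = 0 := by
    simp only [h', βe, γe]; field_simp; ring
  have hε_deriv : h' (ε^2) = 0 := by
    simp only [h', βe, γe]; field_simp; ring
  rw [hf]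
  refine ⟨fun x hx => ⟨?_, ?_⟩, fun x hx => ?_⟩ <;>
    have hne : x.1^2 + x.2^2 ≠ 0 := by rw [hx]; positivity
  · simp [radialMulFst, hx, hR_val]
  · rw [(hasFDerivAt_radialMulFst (hderiv hne)).fderiv, hx, hR_val, hR_deriv]
    simp
  · obtain ⟨h1, h2⟩ := hessian_radialMulFst_apply_tangent
      ((eventually_ne_nhds hne).mono fun t ht => hderiv ht)
      ((hasDerivAt_edgeProfile_deriv βe γe hne).const_mul c)
    rw [hx, hε_deriv] at h1 h2
    exact ⟨by simpa using h1, by simpa using h2⟩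

/-- The edge-dislocation Airy function `W^s_{0,ε}` satisfies the clamped
boundary conditions `f = 0`, `∇f = 0` on the outer circle `|x| = R`, and the traction-free
condition `∇²f·t = 0` on the inner circle `|x| = ε`, where `t = (−x₂, x₁)` is tangent. -/
theorem edge_dislocation_boundary_conditions (E ν s ε R : ℝ)
    (hE : 0 < E) (hν₁ : -1 < ν) (hν₂ : ν < 1/2) (hε : 0 < ε) (hεR : ε < R) :
    let αe : ℝ := 2*(R^2 - ε^2)/(R^2 + ε^2) - 2*Real.log (R^2)
    let βe : ℝ := 2*ε^2*R^2/(R^2 + ε^2)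
    let γe : ℝ := -2/(R^2 + ε^2)
    let f : ℝ × ℝ → ℝ := fun x =>
      (s/(16*π)) * (E/(1-ν^2)) *
        (αe + βe/(x.1^2 + x.2^2) + γe*(x.1^2 + x.2^2) + 2*Real.log (x.1^2 + x.2^2)) * x.1
    -- (i) clamped outer boundary
    (∀ x : ℝ × ℝ, x.1^2 + x.2^2 = R^2 → f x = 0 ∧ fderiv ℝ f x = 0) ∧
    -- (ii) traction-free inner boundary: `∇²f(x)·(−x₂, x₁) = (0,0)`
    (∀ x : ℝ × ℝ, x.1^2 + x.2^2 = ε^2 →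
      pd1 (pd1 f) x * (-x.2) + pd1 (pd2 f) x * x.1 = 0 ∧
      pd2 (pd1 f) x * (-x.2) + pd2 (pd2 f) x * x.1 = 0) :=
  edge_dislocation_boundary_conditions_general E ν s ε R hε hεR
end
end

section
/- Let E > 0, ν ∈ (−1, 1/2), s ∈ ℝ, and 0 < ε < R. With W^s_{0,ε} defined via α_ε, β_ε, γ_ε as in the context, the load term on the core circle equals: (s/(2πε)) · ∫₀^{2π} (∂_{x₁} W^s_{0,ε})(ε·cos t, ε·sin t) · ε dt = −(s²/(4π))·(E/(1−ν²))·( log(R/ε) − (R²−ε²)/(R²+ε²) ), where ∂_{x₁}W^s_{0,ε} is computed from the annulus formula (which is smooth in a neighborhood of the circle |x| = ε inside the annulus). -/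
open Real MeasureTheory Filter

noncomputable section

/-!
`W^s_{0,ε}` has the form `φ(|x|²) x₁`, so on the circle `x = (ε cos t, ε sin t)` its
`x₁`-derivative is `2ε² φ'(ε²) cos² t + φ(ε²)`, whose mean over the circle is
`ε² φ'(ε²) + φ(ε²) = (u φ(u))'` at `u = ε²`. For the profile of `W^s_{0,ε}` the `β_ε / u` term
is constant in `u φ(u)` and drops out, leaving
`(u φ(u))'(ε²) = -(s/(4π)) (E/(1-ν²)) (log (R/ε) - (R²-ε²)/(R²+ε²))`.
-/

lemma pd1_comp_normSq_mul_fst {φ : ℝ → ℝ} {φ' : ℝ} {x : ℝ × ℝ}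
    (hφ : HasDerivAt φ φ' (x.1 ^ 2 + x.2 ^ 2)) :
    pd1 (fun p : ℝ × ℝ => φ (p.1 ^ 2 + p.2 ^ 2) * p.1) x
      = 2 * φ' * x.1 ^ 2 + φ (x.1 ^ 2 + x.2 ^ 2) := by
  have hnormSq : HasFDerivAt (fun p : ℝ × ℝ => p.1 ^ 2 + p.2 ^ 2) _ x :=
    (hasFDerivAt_fst.pow 2).add ((hasFDerivAt_snd (𝕜 := ℝ) (p := x)).pow 2)
  have hW : HasFDerivAt (fun p : ℝ × ℝ => φ (p.1 ^ 2 + p.2 ^ 2) * p.1) _ x :=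
    (hφ.comp_hasFDerivAt x hnormSq).mul hasFDerivAt_fst
  rw [pd1, hW.fderiv]
  simp only [Function.comp_apply, Nat.add_one_sub_one, pow_one, nsmul_eq_mul, Nat.cast_ofNat,
    smul_add, add_apply, smul_apply,
    ContinuousLinearMap.coe_fst', ContinuousLinearMap.coe_snd', smul_eq_mul, mul_one, mul_zero,
    add_zero]
  ring

lemma integral_pd1_comp_normSq_mul_fst_circle {φ : ℝ → ℝ} {φ' ε : ℝ}
    (hφ : HasDerivAt φ φ' (ε ^ 2)) :
    ∫ t in (0:ℝ)..(2 * π), pd1 (fun p : ℝ × ℝ => φ (p.1 ^ 2 + p.2 ^ 2) * p.1)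
        (ε * cos t, ε * sin t) * ε
      = 2 * π * ε * (ε ^ 2 * φ' + φ (ε ^ 2)) := by
  have on_circle (t : ℝ) : (ε * cos t) ^ 2 + (ε * sin t) ^ 2 = ε ^ 2 := by
    rw [mul_pow, mul_pow, ← mul_add, cos_sq_add_sin_sq, mul_one]
  have integrand (t : ℝ) :
      pd1 (fun p : ℝ × ℝ => φ (p.1 ^ 2 + p.2 ^ 2) * p.1) (ε * cos t, ε * sin t) * ε
        = 2 * φ' * ε ^ 3 * cos t ^ 2 + φ (ε ^ 2) * ε := by
    rw [pd1_comp_normSq_mul_fst (by dsimp only; rwa [on_circle]), on_circle]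
    ring
  have hcos : IntervalIntegrable (fun t => 2 * φ' * ε ^ 3 * cos t ^ 2) volume 0 (2 * π) :=
    (continuous_const.mul (continuous_cos.pow 2)).intervalIntegrable _ _
  rw [intervalIntegral.integral_congr (fun t _ => integrand t),
    intervalIntegral.integral_add hcos intervalIntegrable_const,
    intervalIntegral.integral_const_mul, integral_cos_sq, intervalIntegral.integral_const]
  simp only [sin_two_pi, cos_two_pi, sin_zero, cos_zero, smul_eq_mul]
  ring

lemma hasDerivAt_add_div_add_mul_add_two_mul_log (a b c : ℝ) {u : ℝ} (hu : u ≠ 0) :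
    HasDerivAt (fun u => a + b / u + c * u + 2 * log u) (-b / u ^ 2 + c + 2 / u) u := by
  have hinv : HasDerivAt (fun u => b / u) (-b / u ^ 2) u := by
    simpa [div_eq_mul_inv, neg_div, mul_comm] using (hasDerivAt_inv hu).const_mul b
  have hlog : HasDerivAt (fun u => 2 * log u) (2 / u) u := by
    simpa [div_eq_mul_inv] using (hasDerivAt_log hu).const_mul 2
  exact (((hasDerivAt_const u a).add hinv).add ((hasDerivAt_id u).const_mul c)).add hlog
    |>.congr_deriv (by ring)

theorem edge_dislocation_core_load_general (E ν s ε R : ℝ)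
    (hε : 0 < ε) (hεR : ε < R) :
    let αe : ℝ := 2*(R^2 - ε^2)/(R^2 + ε^2) - 2*Real.log (R^2)
    let βe : ℝ := 2*ε^2*R^2/(R^2 + ε^2)
    let γe : ℝ := -2/(R^2 + ε^2)
    let W : ℝ × ℝ → ℝ := fun x =>
      (s/(16*π)) * (E/(1-ν^2)) *
        (αe + βe/(x.1^2 + x.2^2) + γe*(x.1^2 + x.2^2) + 2*Real.log (x.1^2 + x.2^2)) * x.1
    (s/(2*π*ε)) * ∫ t in (0:ℝ)..(2*π), pd1 W (ε * Real.cos t, ε * Real.sin t) * ε =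
      -(s^2/(4*π)) * (E/(1-ν^2)) * (Real.log (R/ε) - (R^2 - ε^2)/(R^2 + ε^2)) := by
  intro αe βe γe W
  have hprofile := (hasDerivAt_add_div_add_mul_add_two_mul_log αe βe γe (pow_ne_zero 2 hε.ne')).const_mul
    (s / (16 * π) * (E / (1 - ν ^ 2)))
  rw [integral_pd1_comp_normSq_mul_fst_circle hprofile]
  have hR : R ≠ 0 := (hε.trans hεR).ne'
  simp only [αe, βe, γe, log_div hR hε.ne', log_pow]
  field_simp
  ring

/-- The load term of the edge-dislocation Airy function `W^s_{0,ε}` on the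
core circle `∂B_ε(0)`:
`(s/(2πε)) ∫_{∂B_ε(0)} ∂_{x₁}W^s_{0,ε} dH¹ = −(s²/(4π))·(E/(1−ν²))·(log(R/ε) − (R²−ε²)/(R²+ε²))`. -/
theorem edge_dislocation_core_load (E ν s ε R : ℝ)
    (hE : 0 < E) (hν₁ : -1 < ν) (hν₂ : ν < 1/2) (hε : 0 < ε) (hεR : ε < R) :
    let αe : ℝ := 2*(R^2 - ε^2)/(R^2 + ε^2) - 2*Real.log (R^2)
    let βe : ℝ := 2*ε^2*R^2/(R^2 + ε^2)
    let γe : ℝ := -2/(R^2 + ε^2)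
    let W : ℝ × ℝ → ℝ := fun x =>
      (s/(16*π)) * (E/(1-ν^2)) *
        (αe + βe/(x.1^2 + x.2^2) + γe*(x.1^2 + x.2^2) + 2*Real.log (x.1^2 + x.2^2)) * x.1
    (s/(2*π*ε)) * ∫ t in (0:ℝ)..(2*π), pd1 W (ε * Real.cos t, ε * Real.sin t) * ε =
      -(s^2/(4*π)) * (E/(1-ν^2)) * (Real.log (R/ε) - (R^2 - ε^2)/(R^2 + ε^2)) :=
  edge_dislocation_core_load_general E ν s ε R hε hεR
end
end

section
/- Let ℓ > 0, let ϑ : [0,ℓ] → ℝ be continuously differentiable, let γ : [0,ℓ] → ℝ² be twice continuously differentiable with γ'(ξ) = (−sin ϑ(ξ), cos ϑ(ξ)) for every ξ, and set n(ξ) := (cos ϑ(ξ), sin ϑ(ξ)). Let v : ℝ² → ℝ be twice continuously differentiable on a neighborhood of the image of γ. Then the traction-free condition ∇²v(γ(ξ))·γ'(ξ) = (0,0) for every ξ ∈ [0,ℓ] holds if and only if there exist constants c₀, c₁, c₂ ∈ ℝ such that for every ξ ∈ [0,ℓ]: v(γ(ξ)) = c₀ + c₁·γ₁(ξ) + c₂·γ₂(ξ)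 and ⟨∇v(γ(ξ)), n(ξ)⟩ = c₁·cos ϑ(ξ) + c₂·sin ϑ(ξ); that is, v has the Dirichlet and Neumann traces of an affine function a(x) = c₀ + c₁x₁ + c₂x₂ along the curve. -/
open Real MeasureTheory Filter

noncomputable section

/-!
By symmetry of the Hessian, `∇²v(γ ξ) · γ'(ξ)` is the derivative of `ξ ↦ ∇v(γ ξ)`, so the
traction-free condition says exactly that `∇v` equals a constant vector `c = (c₁, c₂)` along `γ`.
In the orthonormal frame `(γ', n)` this splits into a tangential and a normal equation. The
tangential component of `∇v(γ ξ)` is `(v ∘ γ)'(ξ)` and that of `c` is `(c · γ)'(ξ)`, so the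
tangential equation on `[0, ℓ]` says that `v ∘ γ - c · γ` is a constant `c₀` there; the normal
equation is the Neumann condition.
-/

open Set

section Calculus

variable {E F : Type*} [NormedAddCommGroup E] [NormedSpace ℝ E]
  [NormedAddCommGroup F] [NormedSpace ℝ F]

theorem fderiv_fderiv_apply_const {f : E → F} {x : E} (w u : E)
    (hf : DifferentiableAt ℝ (fderiv ℝ f) x) :
    fderiv ℝ (fun y => fderiv ℝ f y w) x u = fderiv ℝ (fderiv ℝ f) x u w := by
  rw [fderiv_clm_apply hf (differentiableAt_const w)]
  simp

theorem ContDiffAt.differentiableAt_fderiv_apply {f : E → F} {x : E} (w : E)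
    (hf : ContDiffAt ℝ 2 f x) : DifferentiableAt ℝ (fun y => fderiv ℝ f y w) x :=
  ((hf.fderiv_right (m := 1) (by norm_num)).differentiableAt (by norm_num)).clm_apply
    (differentiableAt_const w)

theorem hasDerivAt_eq_iff_exists_eq_add_const {f g f' g' : ℝ → E} {a b : ℝ} (hab : a < b)
    (hf : ∀ x ∈ Icc a b, HasDerivAt f (f' x) x) (hg : ∀ x ∈ Icc a b, HasDerivAt g (g' x) x) :
    (∀ x ∈ Icc a b, f' x = g' x) ↔ ∃ c, ∀ x ∈ Icc a b, f x = g x + c := by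
  constructor
  · intro h
    refine ⟨f a - g a, fun x hx => ?_⟩
    have hderiv : ∀ y ∈ Icc a b, HasDerivAt (f - g) 0 y := fun y hy => by
      simpa [h y hy] using (hf y hy).sub (hg y hy)
    have hconst := constant_of_has_deriv_right_zero
      (fun y hy => (hderiv y hy).continuousAt.continuousWithinAt)
      (fun y hy => (hderiv y (Ico_subset_Icc_self hy)).hasDerivWithinAt) x hx
    rw [Pi.sub_apply, Pi.sub_apply, sub_eq_iff_eq_add'] at hconst
    rw [hconst, add_comm]
  · rintro ⟨c, hc⟩ x hx
    refine (uniqueDiffOn_Icc hab x hx).eq_deriv _ (hf x hx).hasDerivWithinAt ?_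
    exact ((hg x hx).add_const c).hasDerivWithinAt.congr hc (hc x hx)

theorem hasDerivAt_eq_zero_iff_exists_eq_const {f f' : ℝ → E} {a b : ℝ} (hab : a < b)
    (hf : ∀ x ∈ Icc a b, HasDerivAt f (f' x) x) :
    (∀ x ∈ Icc a b, f' x = 0) ↔ ∃ c, ∀ x ∈ Icc a b, f x = c := by
  simpa using hasDerivAt_eq_iff_exists_eq_add_const hab hf fun x _ => hasDerivAt_const x (0 : E)

end Calculus

theorem hasDerivAt_comp_curve {f : ℝ × ℝ → ℝ} {γ : ℝ → ℝ × ℝ} {ξ a b : ℝ}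
    (hf : DifferentiableAt ℝ f (γ ξ)) (hγ : HasDerivAt γ (a, b) ξ) :
    HasDerivAt (fun t => f (γ t)) (pd1 f (γ ξ) * a + pd2 f (γ ξ) * b) ξ := by
  refine (hf.hasFDerivAt.comp_hasDerivAt ξ hγ).congr_deriv ?_
  have hab : ((a, b) : ℝ × ℝ) = a • ((1 : ℝ), (0 : ℝ)) + b • ((0 : ℝ), (1 : ℝ)) := by simp
  rw [hab, map_add, map_smul, map_smul, smul_eq_mul, smul_eq_mul, mul_comm a, mul_comm b]
  rfl

theorem pd2_pd1_eq_pd1_pd2 {f : ℝ × ℝ → ℝ} {x : ℝ × ℝ} (hf : ContDiffAt ℝ 2 f x) :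
    pd2 (pd1 f) x = pd1 (pd2 f) x := by
  have hd := (hf.fderiv_right (m := 1) (by norm_num)).differentiableAt (by norm_num)
  change fderiv ℝ (fun y => fderiv ℝ f y (1, 0)) x (0, 1)
    = fderiv ℝ (fun y => fderiv ℝ f y (0, 1)) x (1, 0)
  rw [fderiv_fderiv_apply_const _ _ hd, fderiv_fderiv_apply_const _ _ hd]
  exact hf.isSymmSndFDerivAt (by simp) _ _

theorem hasDerivAt_pd1_comp_curve {f : ℝ × ℝ → ℝ} {γ : ℝ → ℝ × ℝ} {ξ a b : ℝ}
    (hf : ContDiffAt ℝ 2 f (γ ξ)) (hγ : HasDerivAt γ (a, b) ξ) :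
    HasDerivAt (fun t => pd1 f (γ t)) (pd1 (pd1 f) (γ ξ) * a + pd1 (pd2 f) (γ ξ) * b) ξ := by
  rw [← pd2_pd1_eq_pd1_pd2 hf]
  exact hasDerivAt_comp_curve (hf.differentiableAt_fderiv_apply _) hγ

theorem hasDerivAt_pd2_comp_curve {f : ℝ × ℝ → ℝ} {γ : ℝ → ℝ × ℝ} {ξ a b : ℝ}
    (hf : ContDiffAt ℝ 2 f (γ ξ)) (hγ : HasDerivAt γ (a, b) ξ) :
    HasDerivAt (fun t => pd2 f (γ t)) (pd2 (pd1 f) (γ ξ) * a + pd2 (pd2 f) (γ ξ) * b) ξ := by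
  rw [pd2_pd1_eq_pd1_pd2 hf]
  exact hasDerivAt_comp_curve (hf.differentiableAt_fderiv_apply _) hγ

theorem eq_and_eq_iff_rotated_frame (θ p₁ p₂ c₁ c₂ : ℝ) :
    (p₁ = c₁ ∧ p₂ = c₂) ↔
      (p₁ * -sin θ + p₂ * cos θ = c₁ * -sin θ + c₂ * cos θ ∧
        p₁ * cos θ + p₂ * sin θ = c₁ * cos θ + c₂ * sin θ) := by
  refine ⟨by rintro ⟨rfl, rfl⟩; simp, fun ⟨ht, hn⟩ => ⟨?_, ?_⟩⟩
  · linear_combination (-sin θ) * ht + cos θ * hn + (p₁ - c₁) * (sin_sq_add_cos_sq θ).symm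
  · linear_combination cos θ * ht + sin θ * hn + (p₂ - c₂) * (sin_sq_add_cos_sq θ).symm

variable {a b : ℝ} {γ : ℝ → ℝ × ℝ} {v : ℝ × ℝ → ℝ}

theorem hessian_tangent_eq_zero_iff_gradient_const {τ : ℝ → ℝ × ℝ} (hab : a < b)
    (hγ : ∀ ξ ∈ Icc a b, HasDerivAt γ (τ ξ) ξ) (hv : ∀ ξ ∈ Icc a b, ContDiffAt ℝ 2 v (γ ξ)) :
    (∀ ξ ∈ Icc a b,
        pd1 (pd1 v) (γ ξ) * (τ ξ).1 + pd1 (pd2 v) (γ ξ) * (τ ξ).2 = 0 ∧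
        pd2 (pd1 v) (γ ξ) * (τ ξ).1 + pd2 (pd2 v) (γ ξ) * (τ ξ).2 = 0) ↔
      ∃ c₁ c₂, ∀ ξ ∈ Icc a b, pd1 v (γ ξ) = c₁ ∧ pd2 v (γ ξ) = c₂ := by
  rw [forall₂_and,
    hasDerivAt_eq_zero_iff_exists_eq_const hab fun ξ hξ =>
      hasDerivAt_pd1_comp_curve (hv ξ hξ) (hγ ξ hξ),
    hasDerivAt_eq_zero_iff_exists_eq_const hab fun ξ hξ =>
      hasDerivAt_pd2_comp_curve (hv ξ hξ) (hγ ξ hξ)]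
  simp only [forall₂_and, exists_and_left, exists_and_right]

variable {ϑ : ℝ → ℝ}

theorem gradient_const_iff_affine_traces (hab : a < b)
    (hγ : ∀ ξ ∈ Icc a b, HasDerivAt γ (-sin (ϑ ξ), cos (ϑ ξ)) ξ)
    (hv : ∀ ξ ∈ Icc a b, DifferentiableAt ℝ v (γ ξ)) :
    (∃ c₁ c₂, ∀ ξ ∈ Icc a b, pd1 v (γ ξ) = c₁ ∧ pd2 v (γ ξ) = c₂) ↔
      ∃ c₀ c₁ c₂, ∀ ξ ∈ Icc a b,
        v (γ ξ) = c₀ + c₁ * (γ ξ).1 + c₂ * (γ ξ).2 ∧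
        pd1 v (γ ξ) * cos (ϑ ξ) + pd2 v (γ ξ) * sin (ϑ ξ) = c₁ * cos (ϑ ξ) + c₂ * sin (ϑ ξ) := by
  have hvγ : ∀ ξ ∈ Icc a b, HasDerivAt (fun t => v (γ t))
      (pd1 v (γ ξ) * -sin (ϑ ξ) + pd2 v (γ ξ) * cos (ϑ ξ)) ξ := fun ξ hξ =>
    hasDerivAt_comp_curve (hv ξ hξ) (hγ ξ hξ)
  have haff (c₁ c₂ : ℝ) : ∀ ξ ∈ Icc a b, HasDerivAt (fun t => c₁ * (γ t).1 + c₂ * (γ t).2)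
      (c₁ * -sin (ϑ ξ) + c₂ * cos (ϑ ξ)) ξ := fun ξ hξ =>
    ((hasFDerivAt_fst (p := γ ξ)).comp_hasDerivAt ξ (hγ ξ hξ) |>.const_mul c₁).add
      ((hasFDerivAt_snd (p := γ ξ)).comp_hasDerivAt ξ (hγ ξ hξ) |>.const_mul c₂)
  calc _ ↔ ∃ c₁ c₂, (∃ c₀, ∀ ξ ∈ Icc a b, v (γ ξ) = c₁ * (γ ξ).1 + c₂ * (γ ξ).2 + c₀) ∧
          ∀ ξ ∈ Icc a b, pd1 v (γ ξ) * cos (ϑ ξ) + pd2 v (γ ξ) * sin (ϑ ξ) =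
            c₁ * cos (ϑ ξ) + c₂ * sin (ϑ ξ) := by
        refine exists₂_congr fun c₁ c₂ => ?_
        rw [← hasDerivAt_eq_iff_exists_eq_add_const hab hvγ (haff c₁ c₂), ← forall₂_and]
        exact forall₂_congr fun ξ _ => eq_and_eq_iff_rotated_frame ..
    _ ↔ _ := by
        constructor
        · rintro ⟨c₁, c₂, ⟨c₀, htrace⟩, hnormal⟩
          exact ⟨c₀, c₁, c₂, fun ξ hξ => ⟨by rw [htrace ξ hξ]; ring, hnormal ξ hξ⟩⟩
        · rintro ⟨c₀, c₁, c₂, h⟩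
          exact ⟨c₁, c₂, ⟨c₀, fun ξ hξ => by rw [(h ξ hξ).1]; ring⟩, fun ξ hξ => (h ξ hξ).2⟩

theorem traction_free_iff_affine_traces_general (ℓ : ℝ) (hℓ : 0 < ℓ)
    (ϑ : ℝ → ℝ) (γ : ℝ → ℝ × ℝ) (v : ℝ × ℝ → ℝ)
    (hγ : ContDiff ℝ 2 γ)
    (hγ' : ∀ ξ : ℝ, deriv γ ξ = (-Real.sin (ϑ ξ), Real.cos (ϑ ξ)))
    (U : Set (ℝ × ℝ)) (hU : IsOpen U) (hγU : ∀ ξ ∈ Set.Icc 0 ℓ, γ ξ ∈ U)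
    (hv : ContDiffOn ℝ 2 v U) :
    (∀ ξ ∈ Set.Icc 0 ℓ,
        pd1 (pd1 v) (γ ξ) * (-Real.sin (ϑ ξ)) + pd1 (pd2 v) (γ ξ) * Real.cos (ϑ ξ) = 0 ∧
        pd2 (pd1 v) (γ ξ) * (-Real.sin (ϑ ξ)) + pd2 (pd2 v) (γ ξ) * Real.cos (ϑ ξ) = 0) ↔
      (∃ c₀ c₁ c₂ : ℝ, ∀ ξ ∈ Set.Icc 0 ℓ,
        v (γ ξ) = c₀ + c₁ * (γ ξ).1 + c₂ * (γ ξ).2 ∧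
        pd1 v (γ ξ) * Real.cos (ϑ ξ) + pd2 v (γ ξ) * Real.sin (ϑ ξ) =
          c₁ * Real.cos (ϑ ξ) + c₂ * Real.sin (ϑ ξ)) := by
  have hγd (ξ : ℝ) : HasDerivAt γ (-sin (ϑ ξ), cos (ϑ ξ)) ξ :=
    hγ' ξ ▸ (hγ.differentiable (by norm_num) ξ).hasDerivAt
  have hv2 : ∀ ξ ∈ Icc 0 ℓ, ContDiffAt ℝ 2 v (γ ξ) := fun ξ hξ =>
    hv.contDiffAt (hU.mem_nhds (hγU ξ hξ))
  exact (hessian_tangent_eq_zero_iff_gradient_const hℓ (fun ξ _ => hγd ξ) hv2).trans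
    (gradient_const_iff_affine_traces hℓ (fun ξ _ => hγd ξ) fun ξ hξ =>
      (hv2 ξ hξ).differentiableAt (by norm_num))

/-- Along an arc-length parametrized curve `γ` with unit tangent
`γ' = (−sin ϑ, cos ϑ)` and unit normal `n = (cos ϑ, sin ϑ)`, the traction-free condition
`∇²v(γ(ξ))·γ'(ξ) = 0` holds on `[0,ℓ]` if and only if the Dirichlet and Neumann traces of `v`
along the curve are those of an affine function `a(x) = c₀ + c₁x₁ + c₂x₂`. -/
theorem traction_free_iff_affine_traces (ℓ : ℝ) (hℓ : 0 < ℓ)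
    (ϑ : ℝ → ℝ) (γ : ℝ → ℝ × ℝ) (v : ℝ × ℝ → ℝ)
    (hϑ : ContDiff ℝ 1 ϑ) (hγ : ContDiff ℝ 2 γ)
    (hγ' : ∀ ξ : ℝ, deriv γ ξ = (-Real.sin (ϑ ξ), Real.cos (ϑ ξ)))
    (U : Set (ℝ × ℝ)) (hU : IsOpen U) (hγU : ∀ ξ ∈ Set.Icc 0 ℓ, γ ξ ∈ U)
    (hv : ContDiffOn ℝ 2 v U) :
    (∀ ξ ∈ Set.Icc 0 ℓ,
        pd1 (pd1 v) (γ ξ) * (-Real.sin (ϑ ξ)) + pd1 (pd2 v) (γ ξ) * Real.cos (ϑ ξ) = 0 ∧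
        pd2 (pd1 v) (γ ξ) * (-Real.sin (ϑ ξ)) + pd2 (pd2 v) (γ ξ) * Real.cos (ϑ ξ) = 0) ↔
      (∃ c₀ c₁ c₂ : ℝ, ∀ ξ ∈ Set.Icc 0 ℓ,
        v (γ ξ) = c₀ + c₁ * (γ ξ).1 + c₂ * (γ ξ).2 ∧
        pd1 v (γ ξ) * Real.cos (ϑ ξ) + pd2 v (γ ξ) * Real.sin (ϑ ξ) =
          c₁ * Real.cos (ϑ ξ) + c₂ * Real.sin (ϑ ξ)) :=
  traction_free_iff_affine_traces_general ℓ hℓ ϑ γ v hγ hγ' U hU hγU hv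
end
end
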